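/- arXiv:0802.2157 — 12 statements merged into one kernel-verified Lean document; each statement's English description precedes it below -/
import Mathlib

section
/- For every finite simple graph G and every ε > 0 there exists a positive integer k₀ such that for every integer k ≥ k₀ the k-th choice number satisfies ch_k(G) ≤ k·(χ(G) + ε), where χ(G) is the chromatic number of G. -/
/-- A graph `G` is `(a:b)`-choosable if for every assignment of color sets of size `a`
to the vertices, one can choose subsets of size `b` that are disjoint on adjacent vertices. -/
def SimpleGraph.Choosable {V : Type*} (G : SimpleGraph V) (a b : ℕ) : Prop :=
  ∀ S : V → Finset ℕ, (∀ v, (S v).card = a) →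
    ∃ C : V → Finset ℕ, (∀ v, C v ⊆ S v) ∧ (∀ v, (C v).card = b) ∧
      ∀ u v, G.Adj u v → Disjoint (C u) (C v)

/-- The `k`-th choice number of `G`: the least `n` such that `G` is `(n:k)`-choosable. -/
noncomputable def SimpleGraph.chooseNum {V : Type*} (G : SimpleGraph V) (k : ℕ) : ℕ :=
  sInf {n | G.Choosable n k}

/-!
Colour the union of the lists so that, inside every atom of the Venn diagram of the lists
`S v`, the `q = χ(G)` colour classes are as equal as possible. A list is the union of at most
`2 ^ |V|` atoms, and an atom of size `n` has at least `n / q - 1` elements in each class, so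
each list has at least `|S v| / q - 2 ^ |V|` elements in the class of its vertex in a proper
`q`-colouring of `G`. Hence `ch_k(G) ≤ q (k + 2 ^ |V|) ≤ k (q + ε)` once `k ≥ q 2 ^ |V| / ε`.
-/

open Finset

lemma Nat.div_le_card_filter_mod_eq {q j : ℕ} (hj : j < q) (n : ℕ) :
    n / q ≤ #{i ∈ range n | i % q = j} := by
  calc n / q = #((range (n / q)).image (· * q + j)) := by
        rw [Finset.card_image_of_injective _ fun a b h => by
          simpa [Nat.mul_left_inj (by omega : q ≠ 0)] using h, card_range]
    _ ≤ #{i ∈ range n | i % q = j} := by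
        refine card_le_card fun i hi => ?_
        obtain ⟨t, ht, rfl⟩ := mem_image.1 hi
        have : (t + 1) * q ≤ n := (Nat.le_div_iff_mul_le (by omega)).1 (mem_range.1 ht)
        simp only [mem_filter, mem_range, Nat.mul_add_mod_self_right, Nat.mod_eq_of_lt hj]
        exact ⟨by linarith, trivial⟩

lemma Finset.exists_equitable_coloring {α γ : Type*} [Fintype γ] [DecidableEq γ] [Nonempty γ]
    (A : Finset α) : ∃ g : α → γ, ∀ c, #A / Fintype.card γ ≤ #{x ∈ A | g x = c} := by
  classical
  set q := Fintype.card γ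
  have hq : 0 < q := Fintype.card_pos
  let e : γ ≃ Fin q := Fintype.equivFin γ
  let idx : α → ℕ := fun x => if hx : x ∈ A then A.equivFin ⟨x, hx⟩ else 0
  have hidx : ∀ x (hx : x ∈ A), idx x = A.equivFin ⟨x, hx⟩ := fun x hx => dif_pos hx
  have hinj : Set.InjOn idx A := fun x hx y hy h => by
    simpa [hidx x hx, hidx y hy, Fin.val_inj] using h
  have himage : A.image idx = range #A := by
    ext i
    simp only [mem_image, mem_range]
    refine ⟨fun ⟨x, hx, hi⟩ => hi ▸ hidx x hx ▸ (A.equivFin _).2, fun hi => ?_⟩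
    refine ⟨A.equivFin.symm ⟨i, hi⟩, (A.equivFin.symm _).2, ?_⟩
    rw [hidx _ (A.equivFin.symm _).2]
    simp
  refine ⟨fun x => e.symm ⟨idx x % q, Nat.mod_lt _ hq⟩, fun c => ?_⟩
  calc #A / q ≤ #{i ∈ range #A | i % q = e c} := Nat.div_le_card_filter_mod_eq (e c).2 _
    _ = #((A.filter (fun x => idx x % q = e c)).image idx) := by rw [← himage, filter_image]
    _ = #{x ∈ A | idx x % q = e c} := card_image_of_injOn (hinj.mono (filter_subset _ _))
    _ = #{x ∈ A | e.symm ⟨idx x % q, Nat.mod_lt _ hq⟩ = c} := by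
        congr 1
        ext x
        simp [Equiv.symm_apply_eq, Fin.ext_iff]

lemma Finset.exists_fiberwise_equitable_coloring {α β γ : Type*} [DecidableEq β] [Fintype γ]
    [DecidableEq γ] [Nonempty γ] (p : α → β) (T : Finset α) :
    ∃ f : α → γ, ∀ b c, #{x ∈ T | p x = b} / Fintype.card γ ≤
      #{x ∈ {x ∈ T | p x = b} | f x = c} := by
  choose g hg using fun b => exists_equitable_coloring (γ := γ) {x ∈ T | p x = b}
  refine ⟨fun x => g (p x) x, fun b c => (hg b c).trans_eq ?_⟩
  congr 1
  exact filter_congr fun x hx => by simp only [(mem_filter.1 hx).2]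

lemma Finset.exists_coloring_card_le_mul_card_filter {W α γ : Type*} [Fintype W] [DecidableEq W]
    [DecidableEq α] [Fintype γ] [DecidableEq γ] [Nonempty γ] (S : W → Finset α) :
    ∃ f : α → γ, ∀ v c,
      #(S v) ≤ Fintype.card γ * (#{x ∈ S v | f x = c} + 2 ^ Fintype.card W) := by
  set q := Fintype.card γ
  have hq : 0 < q := Fintype.card_pos
  let p : α → Finset W := fun x => {v | x ∈ S v}
  obtain ⟨f, hf⟩ := exists_fiberwise_equitable_coloring (γ := γ) p (univ.biUnion S)
  refine ⟨f, fun v c => ?_⟩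
  have hfiber : ∀ b, #{x ∈ S v | p x = b} ≤ q * #{x ∈ {x ∈ S v | p x = b} | f x = c} + q := by
    intro b
    by_cases hv : v ∈ b
    · have hT : {x ∈ S v | p x = b} = {x ∈ univ.biUnion S | p x = b} := by
        ext x
        simp only [mem_filter, mem_biUnion, mem_univ, true_and]
        refine ⟨fun ⟨hx, hb⟩ => ⟨⟨v, hx⟩, hb⟩, fun ⟨_, hb⟩ => ⟨?_, hb⟩⟩
        simpa [p, ← hb] using hv
      rw [hT]
      have := Nat.lt_mul_div_succ #{x ∈ univ.biUnion S | p x = b} hq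
      nlinarith [hf b c]
    · rw [filter_eq_empty_iff.2 fun x hx hb => hv (by simpa [p, ← hb] using hx)]
      simp
  calc #(S v) = ∑ b, #{x ∈ S v | p x = b} := card_eq_sum_card_fiberwise fun x _ => mem_univ _
    _ ≤ ∑ b, (q * #{x ∈ {x ∈ S v | p x = b} | f x = c} + q) := sum_le_sum fun b _ => hfiber b
    _ = q * (#{x ∈ S v | f x = c} + 2 ^ Fintype.card W) := by
        rw [card_eq_sum_card_fiberwise (f := p) (t := univ) fun x _ => mem_univ _]
        simp only [sum_add_distrib, ← mul_sum, sum_const, card_univ, Fintype.card_finset,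
          filter_comm, smul_eq_mul]
        ring

theorem SimpleGraph.Colorable.choosable {V : Type*} [Fintype V] {G : SimpleGraph V} {q : ℕ}
    (hG : G.Colorable q) (k : ℕ) : G.Choosable (q * (k + 2 ^ Fintype.card V)) k := by
  classical
  obtain ⟨col⟩ := hG
  intro S hS
  rcases isEmpty_or_nonempty V with _ | ⟨⟨v₀⟩⟩
  · exact ⟨fun _ => ∅, isEmptyElim, isEmptyElim, fun u => isEmptyElim u⟩
  have : Nonempty (Fin q) := ⟨col v₀⟩
  obtain ⟨f, hf⟩ := exists_coloring_card_le_mul_card_filter (γ := Fin q) S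
  have hk : ∀ v, k ≤ #{x ∈ S v | f x = col v} := fun v => by
    have := hf v (col v)
    rw [hS v, Fintype.card_fin] at this
    exact Nat.le_of_add_le_add_right (Nat.le_of_mul_le_mul_left this (Fin.pos (col v₀)))
  choose C hCS hCcard using fun v => exists_subset_card_eq (hk v)
  refine ⟨C, fun v => (hCS v).trans (filter_subset _ _), hCcard, fun u v huv => ?_⟩
  refine Finset.disjoint_left.2 fun x hxu hxv => col.valid huv ?_
  rw [← (mem_filter.1 (hCS u hxu)).2, ← (mem_filter.1 (hCS v hxv)).2]

theorem kth_choice_number_le_of_large_k {V : Type*} [Fintype V] (G : SimpleGraph V)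
    (ε : ℝ) (hε : 0 < ε) :
    ∃ k₀ : ℕ, 0 < k₀ ∧ ∀ k : ℕ, k₀ ≤ k →
      (G.chooseNum k : ℝ) ≤ (k : ℝ) * ((G.chromaticNumber.toNat : ℝ) + ε) := by
  set q := G.chromaticNumber.toNat
  set m := Fintype.card V
  refine ⟨⌈q * 2 ^ m / ε⌉₊ + 1, Nat.succ_pos _, fun k hk => ?_⟩
  have hk' : (q * 2 ^ m : ℝ) ≤ ε * k := by
    have := (Nat.le_ceil _).trans (Nat.cast_le.2 (Nat.le_of_succ_le hk) : (_ : ℝ) ≤ k)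
    rw [div_le_iff₀ hε] at this
    linarith
  have hchoose : G.chooseNum k ≤ q * (k + 2 ^ m) :=
    Nat.sInf_le (G.colorable_chromaticNumber_of_fintype.choosable k)
  calc (G.chooseNum k : ℝ) ≤ (q * (k + 2 ^ m) : ℕ) := Nat.cast_le.2 hchoose
    _ ≤ k * (q + ε) := by push_cast; linarith
end

section
/- For all integers l > m ≥ 3 there exist a finite simple graph G and positive integers a, b, c, d with c/d = l and a/b = m such that G is (a:b)-choosable but not (c:d)-choosable. (In particular, one may take d = 1, c = l, a = km, b = k for a suitable positive integer k.) -/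
/-! The graph is the complete bipartite graph whose vertices on either side are the `l`-subsets
of a `(2l-1)`-set `X`, each vertex being its own list. In an `(l:1)`-choice the colours used on
one side meet every `l`-subset of `X`, so they cover at least `l` points of `X`; the two sides
use disjoint colours, and `2l > 2l - 1`.

Conversely, split the colours by a uniformly random set `T`, letting left vertices choose from `T`
and right vertices from its complement. A vertex with `3b` colours keeps fewer than `b` of them
with probability `∑ i < b, (3b).choose i / 2 ^ (3b) ≤ (27/32) ^ b` (compare with
`(1 + 2) ^ (3b)`), so for large `b` some split serves all vertices at once, and the graph is
`(3b:b)`-, hence `(mb:b)`-choosable. -/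

open Finset

namespace Finset

variable {α γ ι : Type*}

theorem card_filter_powerset_union_inter [DecidableEq α] {S R : Finset α} (hSR : Disjoint S R)
    (p : Finset α → Prop) [DecidablePred p] :
    #{T ∈ (S ∪ R).powerset | p (T ∩ S)} = #{P ∈ S.powerset | p P} * 2 ^ #R := by
  induction R using Finset.induction_on with
  | empty =>
    rw [union_empty, card_empty, pow_zero, mul_one]
    exact congrArg card <| filter_congr fun T hT ↦ by rw [inter_eq_left.2 (mem_powerset.1 hT)]
  | insert a R haR ih =>
    have haS : a ∉ S := disjoint_right.1 hSR (mem_insert_self a R)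
    rw [union_insert, card_filter, sum_powerset_insert (by simp [haS, haR])]
    simp only [insert_inter_of_notMem haS]
    rw [← card_filter, ih (hSR.mono_right (subset_insert a R)), card_insert_of_notMem haR, pow_succ]
    ring

theorem card_filter_powerset_inter [DecidableEq α] {S U : Finset α} (hSU : S ⊆ U)
    (p : Finset α → Prop) [DecidablePred p] :
    #{T ∈ U.powerset | p (T ∩ S)} = #{P ∈ S.powerset | p P} * 2 ^ #(U \ S) := by
  conv_lhs => rw [← union_sdiff_of_subset hSU]
  exact card_filter_powerset_union_inter disjoint_sdiff p

theorem card_filter_powerset_sdiff [DecidableEq α] (U : Finset α)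
    (p : Finset α → Prop) [DecidablePred p] :
    #{T ∈ U.powerset | p (U \ T)} = #{T ∈ U.powerset | p T} := by
  refine card_nbij' (U \ ·) (U \ ·) ?_ ?_ ?_ ?_ <;> intro T hT <;>
    simp only [coe_filter, Set.mem_ofPred_eq, mem_powerset] at hT ⊢
  · exact ⟨sdiff_subset, hT.2⟩
  · exact ⟨sdiff_subset, (sdiff_sdiff_eq_self hT.1).symm ▸ hT.2⟩
  · exact sdiff_sdiff_eq_self hT.1
  · exact sdiff_sdiff_eq_self hT.1

theorem card_filter_powerset_card_lt (S : Finset α) (b : ℕ) :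
    #{P ∈ S.powerset | #P < b} = ∑ i ∈ range b, (#S).choose i := by
  rw [card_eq_sum_card_fiberwise (f := card) (t := range b) fun P hP ↦ by
    simpa using (mem_filter.1 hP).2]
  refine sum_congr rfl fun i hi ↦ ?_
  rw [filter_filter, ← card_powersetCard, powersetCard_eq_filter]
  exact congrArg card <| filter_congr fun P _ ↦ ⟨And.right, fun h ↦ ⟨h ▸ mem_range.1 hi, h⟩⟩

theorem card_filter_powerset_card_inter_lt_mul [DecidableEq α] {S U : Finset α} (hSU : S ⊆ U)
    (b : ℕ) :
    #{T ∈ U.powerset | #(T ∩ S) < b} * 2 ^ #S = (∑ i ∈ range b, (#S).choose i) * 2 ^ #U := by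
  rw [card_filter_powerset_inter hSU (fun P ↦ #P < b), card_filter_powerset_card_lt, mul_assoc,
    ← pow_add, card_sdiff_add_card_eq_card hSU]

theorem exists_mem_forall_not_of_sum_card_filter_lt [Fintype ι] {s : Finset γ}
    (B : ι → γ → Prop) [∀ i, DecidablePred (B i)] (h : ∑ i, #{x ∈ s | B i x} < #s) :
    ∃ x ∈ s, ∀ i, ¬ B i x := by
  classical
  by_contra! hs
  have hcover : s ⊆ univ.biUnion fun i ↦ {x ∈ s | B i x} := fun x hx ↦ by
    obtain ⟨i, hi⟩ := hs x hx
    exact mem_biUnion.2 ⟨i, mem_univ i, mem_filter.2 ⟨hx, hi⟩⟩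
  exact (card_le_card hcover |>.trans card_biUnion_le).not_gt h

theorem card_sdiff_lt_of_forall_inter_nonempty [DecidableEq α] {X T : Finset α} {n : ℕ}
    (h : ∀ s ∈ X.powersetCard n, (s ∩ T).Nonempty) : #(X \ T) < n := by
  by_contra! hn
  obtain ⟨s, hsX, hs⟩ := exists_subset_card_eq hn
  obtain ⟨x, hx⟩ := h s (mem_powersetCard.2 ⟨hsX.trans sdiff_subset, hs⟩)
  exact (mem_sdiff.1 (hsX (mem_inter.1 hx).1)).2 (mem_inter.1 hx).2

end Finset

theorem sum_range_choose_mul_four_pow_le (b : ℕ) :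
    (∑ i ∈ range b, (3 * b).choose i) * 4 ^ b ≤ 27 ^ b := by
  calc (∑ i ∈ range b, (3 * b).choose i) * 4 ^ b
      ≤ ∑ i ∈ range b, 2 ^ (3 * b - i) * (3 * b).choose i := by
        rw [sum_mul]
        refine sum_le_sum fun i hi ↦ ?_
        rw [mul_comm, show 4 ^ b = 2 ^ (2 * b) by rw [pow_mul]; norm_num]
        exact Nat.mul_le_mul_right _ (Nat.pow_le_pow_right two_pos (by simp at hi; omega))
    _ ≤ ∑ i ∈ range (3 * b + 1), 2 ^ (3 * b - i) * (3 * b).choose i :=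
        sum_le_sum_of_subset (range_subset_range.2 (by omega))
    _ = 27 ^ b := by
        rw [show 27 ^ b = (1 + 2) ^ (3 * b) by rw [pow_mul]; norm_num, add_pow]
        simp

theorem exists_pos_mul_sum_range_choose_lt (N : ℕ) :
    ∃ b, 0 < b ∧ N * ∑ i ∈ range b, (3 * b).choose i < 8 ^ b := by
  obtain ⟨b, hNb, hb⟩ := (((tendsto_pow_atTop_atTop_of_one_lt
    (show (1 : ℝ) < 32 / 27 by norm_num)).eventually_gt_atTop (N : ℝ)).and
    (Filter.eventually_gt_atTop 0)).exists
  have h27 : N * 27 ^ b < 32 ^ b := by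
    rw [div_pow, lt_div_iff₀ (by positivity)] at hNb
    exact_mod_cast hNb
  refine ⟨b, hb, Nat.lt_of_mul_lt_mul_right (a := 4 ^ b) ?_⟩
  calc N * (∑ i ∈ range b, (3 * b).choose i) * 4 ^ b
      ≤ N * 27 ^ b := by
        rw [mul_assoc]; exact Nat.mul_le_mul_left N (sum_range_choose_mul_four_pow_le b)
    _ < 32 ^ b := h27
    _ = 8 ^ b * 4 ^ b := by rw [← mul_pow]; norm_num

namespace SimpleGraph

theorem Choosable.mono {V : Type*} {G : SimpleGraph V} {a a' b : ℕ} (h : G.Choosable a b)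
    (ha : a ≤ a') : G.Choosable a' b := by
  intro S hS
  choose S' hS'S hS' using fun v ↦ exists_subset_card_eq ((hS v).symm ▸ ha)
  obtain ⟨C, hCS', hC, hCadj⟩ := h S' hS'
  exact ⟨C, fun v ↦ (hCS' v).trans (hS'S v), hC, hCadj⟩

end SimpleGraph

theorem completeBipartiteGraph_choosable {α β : Type*} [Fintype α] [Fintype β] {a b : ℕ}
    (h : (Fintype.card α + Fintype.card β) * ∑ i ∈ range b, a.choose i < 2 ^ a) :
    (completeBipartiteGraph α β).Choosable a b := by
  intro S hS
  set U := univ.biUnion S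
  have hSU (v : α ⊕ β) : S v ⊆ U := subset_biUnion_of_mem S (mem_univ v)
  -- a random `T ⊆ U` gives the colours of the left side, `U \ T` those of the right side
  let side (T : Finset ℕ) : α ⊕ β → Finset ℕ := Sum.elim (fun _ ↦ T) (fun _ ↦ U \ T)
  have hbad (v : α ⊕ β) :
      #{T ∈ U.powerset | #(side T v ∩ S v) < b} * 2 ^ a
        = (∑ i ∈ range b, a.choose i) * 2 ^ #U := by
    rw [← hS v, ← card_filter_powerset_card_inter_lt_mul (hSU v)]
    rcases v with x | y
    · rfl
    · exact congrArg (· * _) (card_filter_powerset_sdiff U fun T ↦ #(T ∩ S (.inr y)) < b)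
  have hsum : ∑ v, #{T ∈ U.powerset | #(side T v ∩ S v) < b} < #U.powerset := by
    refine Nat.lt_of_mul_lt_mul_right (a := 2 ^ a) ?_
    rw [sum_mul, sum_congr rfl fun v _ ↦ hbad v, sum_const, card_univ, Fintype.card_sum,
      card_powerset, smul_eq_mul, ← mul_assoc, mul_comm (2 ^ #U)]
    exact Nat.mul_lt_mul_of_pos_right h (by positivity)
  obtain ⟨T, -, hT⟩ := exists_mem_forall_not_of_sum_card_filter_lt _ hsum
  choose C hCT hC using fun v ↦ exists_subset_card_eq (not_lt.1 (hT v))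
  refine ⟨C, fun v ↦ (hCT v).trans inter_subset_right, hC, ?_⟩
  have hleft (x : α) : C (.inl x) ⊆ T := (hCT _).trans inter_subset_left
  have hright (y : β) : C (.inr y) ⊆ U \ T := (hCT _).trans inter_subset_left
  rintro (x | x) (y | y) hxy <;> simp at hxy
  · exact disjoint_sdiff.mono (hleft x) (hright y)
  · exact (disjoint_sdiff.mono (hleft y) (hright x)).symm

theorem not_choosable_completeBipartiteGraph_powersetCard {X : Finset ℕ} {n : ℕ}
    (hX : 2 * n ≤ #X + 1) :
    ¬ (completeBipartiteGraph (X.powersetCard n) (X.powersetCard n)).Choosable n 1 := by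
  intro h
  obtain ⟨C, hCS, hC, hCadj⟩ := h (Sum.elim (↑) (↑)) (by
    rintro (s | s) <;> exact (mem_powersetCard.1 s.2).2)
  set T₁ := univ.biUnion (C ∘ Sum.inl)
  set T₂ := univ.biUnion (C ∘ Sum.inr)
  have hT : Disjoint T₁ T₂ := by
    simp only [T₁, T₂, disjoint_biUnion_left, disjoint_biUnion_right]
    exact fun x _ y _ ↦ hCadj _ _ (by simp)
  -- every `n`-subset of `X` is the list of a vertex on each side, so it meets `T₁` and `T₂`
  have hsmall (side : X.powersetCard n → X.powersetCard n ⊕ X.powersetCard n)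
      (hside : ∀ s, C (side s) ⊆ s) :
      #(X \ univ.biUnion (C ∘ side)) < n := by
    refine card_sdiff_lt_of_forall_inter_nonempty fun s hs ↦ ?_
    obtain ⟨c, hc⟩ := card_pos.1 (hC (side ⟨s, hs⟩) ▸ one_pos)
    exact ⟨c, mem_inter.2 ⟨hside _ hc, mem_biUnion.2 ⟨_, mem_univ _, hc⟩⟩⟩
  have h₁ : #(X \ T₁) < n := hsmall Sum.inl fun s ↦ hCS (.inl s)
  have h₂ : #(X \ T₂) < n := hsmall Sum.inr fun s ↦ hCS (.inr s)
  have hcover : #X ≤ #(X \ T₁) + #(X \ T₂) := by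
    refine (card_le_card fun c hc ↦ ?_).trans (card_union_le _ _)
    by_cases hc₁ : c ∈ T₁
    · exact mem_union_right _ (mem_sdiff.2 ⟨hc, disjoint_left.1 hT hc₁⟩)
    · exact mem_union_left _ (mem_sdiff.2 ⟨hc, hc₁⟩)
  omega

theorem exists_ab_choosable_not_cd_choosable (l m : ℕ) (hm : 3 ≤ m) (hlm : m < l) :
    ∃ (V : Type) (_ : Fintype V) (G : SimpleGraph V) (a b c d : ℕ),
      0 < a ∧ 0 < b ∧ 0 < c ∧ 0 < d ∧ c = l * d ∧ a = m * b ∧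
      G.Choosable a b ∧ ¬ G.Choosable c d := by
  set K := (range (2 * l - 1)).powersetCard l
  obtain ⟨b, hb, hKb⟩ := exists_pos_mul_sum_range_choose_lt (#K + #K)
  refine ⟨K ⊕ K, inferInstance, completeBipartiteGraph K K, m * b, b, l, 1, by positivity, hb,
    by omega, one_pos, (mul_one l).symm, rfl, ?_, ?_⟩
  · refine (completeBipartiteGraph_choosable ?_).mono (Nat.mul_le_mul_right b hm)
    simpa [pow_mul] using hKb
  · exact not_choosable_completeBipartiteGraph_powersetCard (by simp only [card_range]; omega)
end

section
/- Let D = (V,E) be a finite digraph containing no odd directed (simple) cycle, and let k ≥ 1. For each vertex v ∈ V let S(v) be a set of size k·(d⁺_D(v) + 1), where d⁺_D(v) is the outdegree of v in D. Then there exist subsets C(v) ⊆ S(v) with |C(v)| = k for all v ∈ V such that C(u) ∩ C(v) = ∅ for every two adjacent vertices u, v ∈ V (i.e., whenever (u,v) or (v,u) is an edge of D). -/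
/-- A directed graph (given by its edge relation `E`) has an odd directed simple cycle
if there are distinct vertices `v, l₀, …, l_{n-1}` with edges
`v → l₀ → ⋯ → l_{n-1} → v`, the length `n + 1` being odd. -/
def HasOddDirectedCycle {V : Type*} (E : V → V → Prop) : Prop :=
  ∃ (v : V) (l : List V), (v :: l).Nodup ∧ Odd (l.length + 1) ∧ List.Chain E v (l ++ [v])

/-!
By Richardson's theorem every induced subdigraph of `E` has a kernel, an independent set `K`
into which every other vertex has an edge. Indeed, an odd closed walk of minimal length would
be an odd cycle, so within a terminal strong component the vertices at even distance from a
fixed root form a kernel; removing the component together with the in-neighbours of this kernel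
and recursing gives a kernel of the whole digraph.

The sets `C v` are then built greedily, maintaining `need v + ∑_{v → u} need u ≤ #(L v)`:
pick a colour `c`, a kernel `K` of the vertices that still need colours and have `c` in their
list, give `c` to `K` and delete it from all lists. A vertex that loses `c` from its list is in
`K` or has an out-neighbour in `K`, so the left side of the invariant drops as well.
-/

open Relation Finset

namespace List

variable {α : Type*}

theorem Duplicate.exists_eq_append_cons {x : α} {l : List α} (h : Duplicate x l) :
    ∃ p q, l = p ++ x :: q ∧ x ∈ q := by
  induction h with
  | cons_mem hx => exact ⟨[], _, rfl, hx⟩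
  | cons_duplicate _ ih =>
    obtain ⟨p, q, rfl, hq⟩ := ih
    exact ⟨_ :: p, q, rfl, hq⟩

theorem isChain_rotate {R : α → α → Prop} {a x : α} {p q : List α}
    (ha : (p ++ x :: q).head? = some a) (h : (p ++ x :: q ++ [a]).IsChain R) :
    (x :: q ++ p ++ [x]).IsChain R := by
  cases p with
  | nil => simp_all
  | cons b p =>
    obtain rfl : b = a := by simpa using ha
    simp only [cons_append, append_assoc] at h ⊢
    exact isChain_cons_split.mpr (isChain_cons_split.mp h).symm

end List

section DigraphKernels

variable {V : Type*} {E : V → V → Prop}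

/-- A shortest odd closed walk is a cycle: at a repeated vertex it splits into two shorter closed
walks, one of which is odd. -/
theorem hasOddDirectedCycle_of_isChain {v : V} {l : List V} (h : (v :: l ++ [v]).IsChain E)
    (hodd : Odd (l.length + 1)) : HasOddDirectedCycle E := by
  induction hn : l.length using Nat.strong_induction_on generalizing v l with
  | _ n ih =>
  by_cases hnd : (v :: l).Nodup
  · exact ⟨v, l, hnd, hodd, h⟩
  obtain ⟨x, hx⟩ := List.exists_duplicate_iff_not_nodup.mpr hnd
  obtain ⟨p, q, hpq, hxq⟩ := hx.exists_eq_append_cons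
  have hrot := List.isChain_rotate (by rw [← hpq]; rfl) (hpq ▸ h)
  obtain ⟨q₁, q₂, rfl⟩ := List.append_of_mem hxq
  have hlen := congrArg List.length hpq
  simp only [List.length_cons, List.length_append] at hlen
  rw [show x :: (q₁ ++ x :: q₂) ++ p ++ [x] = x :: (q₁ ++ x :: (q₂ ++ p ++ [x])) by simp,
    List.isChain_cons_split] at hrot
  rcases Nat.even_or_odd (q₁.length + 1) with heven | hodd₁
  · refine ih (q₂ ++ p).length (by simp; omega) (by simpa using hrot.2) ?_ rfl
    simp only [List.length_append]
    rw [Nat.odd_iff] at hodd ⊢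
    rw [Nat.even_iff] at heven
    omega
  · exact ih q₁.length (by omega) hrot.1 hodd₁ rfl

/-- Paths from `(a, false)` to `(b, p)` in `parityCover E` are walks from `a` to `b` in `E`
of length of parity `p`. -/
def parityCover (E : V → V → Prop) (x y : V × Bool) : Prop :=
  E x.1 y.1 ∧ y.2 = !x.2

def HasOddClosedWalk (E : V → V → Prop) : Prop :=
  ∃ a, ReflTransGen (parityCover E) (a, false) (a, true)

theorem exists_isChain_of_reflTransGen_parityCover {a : V} {y : V × Bool}
    (h : ReflTransGen (parityCover E) (a, false) y) :
    ∃ l, (a :: l).IsChain E ∧ (a :: l).getLast? = some y.1 ∧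
      (Odd l.length ↔ y.2 = true) := by
  induction h with
  | refl => exact ⟨[], by simp⟩
  | @tail x y _ hxy ih =>
    obtain ⟨l, hl, hlast, hpar⟩ := ih
    refine ⟨l ++ [y.1], ?_, ?_, ?_⟩
    · rw [← List.cons_append, List.isChain_append]
      exact ⟨hl, .singleton _, by simpa [hlast] using hxy.1⟩
    · rw [← List.cons_append, List.getLast?_concat]
    · simp [hxy.2, Nat.odd_add_one, hpar]

theorem HasOddClosedWalk.hasOddDirectedCycle (h : HasOddClosedWalk E) :
    HasOddDirectedCycle E := by
  obtain ⟨a, ha⟩ := h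
  obtain ⟨l, hl, hlast, hodd⟩ := exists_isChain_of_reflTransGen_parityCover ha
  obtain rfl | ⟨l, b, rfl⟩ := l.eq_nil_or_concat
  · simp at hodd
  simp only [List.concat_eq_append] at hl hlast hodd
  rw [← List.cons_append, List.getLast?_concat, Option.some_inj] at hlast
  subst hlast
  exact hasOddDirectedCycle_of_isChain hl (by simpa using hodd)

theorem HasOddClosedWalk.mono {R : V → V → Prop} (h : HasOddClosedWalk R) (hRE : R ≤ E) :
    HasOddClosedWalk E := by
  obtain ⟨a, ha⟩ := h
  exact ⟨a, ReflTransGen.mono (fun x y hxy => ⟨hRE _ _ hxy.1, hxy.2⟩) _ _ ha⟩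

theorem exists_reflTransGen_parityCover {a b : V} (h : ReflTransGen E a b) (p : Bool) :
    ∃ q, ReflTransGen (parityCover E) (a, p) (b, q) := by
  induction h with
  | refl => exact ⟨p, .refl⟩
  | tail _ hbc ih =>
    obtain ⟨q, hq⟩ := ih
    exact ⟨!q, hq.tail ⟨hbc, rfl⟩⟩

theorem reflTransGen_parityCover_not {a b : V} {p q : Bool}
    (h : ReflTransGen (parityCover E) (a, p) (b, q)) :
    ReflTransGen (parityCover E) (a, !p) (b, !q) :=
  h.lift (Prod.map id not) fun _ _ hxy => ⟨hxy.1, by simp [hxy.2]⟩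

theorem Relation.ReflTransGen.of_parityCover {x y : V × Bool}
    (h : ReflTransGen (parityCover E) x y) : ReflTransGen E x.1 y.1 :=
  h.lift Prod.fst fun _ _ hxy => hxy.1

structure IsKernel (E : V → V → Prop) (B K : Finset V) : Prop where
  subset : K ⊆ B
  independent : ∀ u ∈ K, ∀ v ∈ K, ¬ E u v
  absorbing : ∀ v ∈ B, v ∉ K → ∃ u ∈ K, E v u

theorem IsKernel.of_restrict {B S K : Finset V} (hK : IsKernel (fun x y => E x y ∧ y ∈ B) S K)
    (hSB : S ⊆ B) : IsKernel E S K where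
  subset := hK.subset
  independent u hu v hv huv := hK.independent u hu v hv ⟨huv, hSB (hK.subset hv)⟩
  absorbing v hv hvK := by
    obtain ⟨u, hu, hvu, -⟩ := hK.absorbing v hv hvK
    exact ⟨u, hu, hvu⟩

section Kernel

open scoped Classical

variable [Fintype V]

theorem exists_reflTransGen_forall_reflTransGen_imp (R : V → V → Prop) (a : V) :
    ∃ m, ReflTransGen R a m ∧ ∀ v, ReflTransGen R m v → ReflTransGen R v m := by
  obtain ⟨m, ham, hmin⟩ := exists_min_image ({v | ReflTransGen R a v} : Finset V)
    (fun m => #({v | ReflTransGen R m v} : Finset V)) ⟨a, (mem_filter_univ _).mpr .refl⟩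
  simp only [mem_filter_univ] at ham hmin
  refine ⟨m, ham, fun v hmv => ?_⟩
  by_contra hvm
  refine (hmin v (ham.trans hmv)).not_gt (card_lt_card ⟨?_, fun hsub => hvm ?_⟩)
  · intro w hw
    simp only [mem_filter_univ] at hw ⊢
    exact hmv.trans hw
  · simpa using hsub ((mem_filter_univ _).mpr .refl)

theorem isKernel_evenPart (hE : ¬HasOddClosedWalk E) {m : V}
    (hm : ∀ v, ReflTransGen E m v → ReflTransGen E v m) :
    IsKernel E {v | ReflTransGen E m v}
      {v | ReflTransGen (parityCover E) (m, false) (v, false)} := by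
  have parity_unique : ∀ v, ReflTransGen E m v →
      ReflTransGen (parityCover E) (m, false) (v, false) →
      ¬ReflTransGen (parityCover E) (m, false) (v, true) := by
    intro v hv hf ht
    obtain ⟨q, hq⟩ := exists_reflTransGen_parityCover (hm v hv) false
    cases q
    · exact hE ⟨m, ht.trans (reflTransGen_parityCover_not hq)⟩
    · exact hE ⟨m, hf.trans hq⟩
  refine ⟨fun v hv => ?_, fun u hu v hv huv => ?_, fun v hv hvK => ?_⟩
  · simp only [mem_filter_univ] at hv ⊢
    exact hv.of_parityCover
  · simp only [mem_filter_univ] at hu hv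
    exact parity_unique v hv.of_parityCover hv (hu.tail ⟨huv, rfl⟩)
  · simp only [mem_filter_univ] at hv hvK ⊢
    obtain ⟨q, hq⟩ := exists_reflTransGen_parityCover hv false
    cases q
    · exact absurd hq hvK
    obtain rfl | ⟨w, hvw, -⟩ := (hm v hv).cases_head
    · exact absurd .refl hvK
    exact ⟨w, hq.tail ⟨hvw, rfl⟩, hvw⟩

theorem IsKernel.union {B S K K' : Finset V} (hSB : S ⊆ B)
    (hS : ∀ u ∈ S, ∀ w ∈ B, E u w → w ∈ S) (hK : IsKernel E S K)
    (hK' : IsKernel E {v ∈ B \ S | ∀ u ∈ K, ¬E v u} K') : IsKernel E B (K ∪ K') := by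
  have hK'B : ∀ v ∈ K', v ∈ B ∧ v ∉ S ∧ ∀ u ∈ K, ¬E v u := fun v hv => by
    simpa [and_assoc] using hK'.subset hv
  refine ⟨union_subset (hK.subset.trans hSB) fun v hv => (hK'B v hv).1, ?_, ?_⟩
  · intro u hu v hv huv
    rcases mem_union.mp hu with hu | hu <;> rcases mem_union.mp hv with hv | hv
    · exact hK.independent u hu v hv huv
    · exact (hK'B v hv).2.1 (hS u (hK.subset hu) v (hK'B v hv).1 huv)
    · exact (hK'B u hu).2.2 v hv huv
    · exact hK'.independent u hu v hv huv
  · intro v hv hvK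
    simp only [mem_union, not_or] at hvK
    by_cases hvS : v ∈ S
    · obtain ⟨u, hu, hvu⟩ := hK.absorbing v hvS hvK.1
      exact ⟨u, mem_union_left _ hu, hvu⟩
    by_cases hvu : ∃ u ∈ K, E v u
    · obtain ⟨u, hu, hvu⟩ := hvu
      exact ⟨u, mem_union_left _ hu, hvu⟩
    obtain ⟨u, hu, hvu⟩ := hK'.absorbing v (by simp_all) hvK.2
    exact ⟨u, mem_union_right _ hu, hvu⟩

theorem exists_isKernel (hE : ¬HasOddClosedWalk E) (B : Finset V) : ∃ K, IsKernel E B K := by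
  induction B using Finset.strongInduction with
  | _ B ih =>
  obtain rfl | ⟨a, ha⟩ := B.eq_empty_or_nonempty
  · exact ⟨∅, by simp, by simp, by simp⟩
  set EB : V → V → Prop := fun x y => E x y ∧ y ∈ B
  have mem_of_reflTransGen {x y : V} (h : ReflTransGen EB x y) (hx : x ∈ B) : y ∈ B := by
    obtain rfl | ⟨_, _, h⟩ := h.cases_tail
    exacts [hx, h.2]
  obtain ⟨m, ham, hm⟩ := exists_reflTransGen_forall_reflTransGen_imp EB a
  have hmB := mem_of_reflTransGen ham ha
  set S : Finset V := {v | ReflTransGen EB m v}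
  set K : Finset V := {v | ReflTransGen (parityCover EB) (m, false) (v, false)}
  have hSB : S ⊆ B := fun v hv => mem_of_reflTransGen (by simpa [S] using hv) hmB
  have hK := (isKernel_evenPart (fun h => hE (h.mono fun _ _ h => h.1)) hm).of_restrict hSB
  obtain ⟨K', hK'⟩ := ih {v ∈ B \ S | ∀ u ∈ K, ¬E v u} <|
    (filter_subset _ _).trans_ssubset <| sdiff_ssubset hSB ⟨m, (mem_filter_univ _).mpr .refl⟩
  refine ⟨_, hK.union hSB (fun u hu w hw huw => ?_) hK'⟩
  simp only [S, mem_filter_univ] at hu ⊢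
  exact hu.tail ⟨huw, hw⟩

end Kernel

theorem sum_sub_ite_lt [DecidableEq V] {s K : Finset V} {f : V → ℕ} (hK : ∀ u ∈ K, 0 < f u)
    (hsK : ∃ u ∈ s, u ∈ K) :
    ∑ u ∈ s, (f u - if u ∈ K then 1 else 0) < ∑ u ∈ s, f u := by
  obtain ⟨u, hus, huK⟩ := hsK
  refine sum_lt_sum (fun _ _ => Nat.sub_le _ _) ⟨u, hus, ?_⟩
  simp only [huK, if_true]
  exact Nat.sub_lt (hK u huK) one_pos

section Coloring

variable [Fintype V] [DecidableEq V] [DecidableRel E] {α : Type*} [DecidableEq α]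

theorem le_card_erase_of_isKernel {need : V → ℕ} {L : V → Finset α} {c : α} {K : Finset V}
    (hK : IsKernel E {v | c ∈ L v ∧ 0 < need v} K)
    (hL : ∀ v, 0 < need v → need v + ∑ u with E v u, need u ≤ #(L v)) (v : V)
    (hv : 0 < need v - if v ∈ K then 1 else 0) :
    (need v - if v ∈ K then 1 else 0) + ∑ u with E v u, (need u - if u ∈ K then 1 else 0) ≤
      #((L v).erase c) := by
  have hKpos : ∀ u ∈ K, 0 < need u := fun u hu => by
    simpa using (mem_filter.mp (hK.subset hu)).2.2
  have hsum_le :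
      ∑ u with E v u, (need u - if u ∈ K then 1 else 0) ≤ ∑ u with E v u, need u :=
    sum_le_sum fun _ _ => Nat.sub_le _ _
  have hv' : 0 < need v := hv.trans_le (Nat.sub_le _ _)
  have hLv := hL v hv'
  by_cases hc : c ∈ L v
  · rw [card_erase_of_mem hc]
    by_cases hvK : v ∈ K
    · simp only [hvK, if_true] at hv ⊢
      omega
    · obtain ⟨u, huK, hvu⟩ := hK.absorbing v (by simp [hc, hv']) hvK
      have := sum_sub_ite_lt hKpos ⟨u, by simpa using hvu, huK⟩ (s := {u | E v u})
      simp only [hvK, if_false] at hv ⊢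
      omega
  · rw [erase_eq_of_notMem hc]
    have := Nat.sub_le (need v) (if v ∈ K then 1 else 0)
    omega

theorem exists_listColoring_of_isKernel (hE : ∀ B : Finset V, ∃ K, IsKernel E B K)
    (need : V → ℕ) (L : V → Finset α)
    (hL : ∀ v, 0 < need v → need v + ∑ u with E v u, need u ≤ #(L v)) :
    ∃ C : V → Finset α, (∀ v, C v ⊆ L v) ∧ (∀ v, #(C v) = need v) ∧
      ∀ u v, E u v → Disjoint (C u) (C v) := by
  induction hn : ∑ v, need v using Nat.strong_induction_on generalizing need L with
  | _ n ih =>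
  by_cases hzero : ∀ v, need v = 0
  · exact ⟨fun _ => ∅, by simp, by simp [hzero], by simp⟩
  obtain ⟨v₀, hv₀⟩ := not_forall.mp hzero
  obtain ⟨c, hc⟩ : (L v₀).Nonempty := card_pos.mp (by have := hL v₀ (by omega); omega)
  obtain ⟨K, hK⟩ := hE {v | c ∈ L v ∧ 0 < need v}
  have hKL : ∀ u ∈ K, c ∈ L u ∧ 0 < need u := fun u hu => by simpa using hK.subset hu
  obtain ⟨u₀, hu₀⟩ : K.Nonempty := by
    by_contra hKe
    obtain ⟨u, hu, -⟩ := hK.absorbing v₀ (by simp [hc]; omega) (by simp_all)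
    exact hKe ⟨u, hu⟩
  obtain ⟨C, hCL, hCcard, hCdisj⟩ := ih _
    (hn ▸ sum_sub_ite_lt (fun u hu => (hKL u hu).2) ⟨u₀, mem_univ _, hu₀⟩)
    (fun v => need v - if v ∈ K then 1 else 0) (fun v => (L v).erase c)
    (le_card_erase_of_isKernel hK hL) rfl
  have hcC : ∀ v, c ∉ C v := fun v h => by simpa using hCL v h
  refine ⟨fun v => if v ∈ K then insert c (C v) else C v, fun v => ?_, fun v => ?_, ?_⟩
  · dsimp only
    split_ifs with hv
    · exact insert_subset (hKL v hv).1 ((hCL v).trans (erase_subset _ _))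
    · exact (hCL v).trans (erase_subset _ _)
  · have := hCcard v
    dsimp only
    split_ifs at this ⊢ with hv
    · rw [card_insert_of_notMem (hcC v), this]
      have := (hKL v hv).2
      omega
    · simpa using this
  · intro u v huv
    have := hCdisj u v huv
    dsimp only
    split_ifs with hu hv hv
    · exact absurd huv (hK.independent u hu v hv)
    · exact disjoint_insert_left.mpr ⟨hcC v, this⟩
    · exact disjoint_insert_right.mpr ⟨hcC u, this⟩
    · exact this

end Coloring

end DigraphKernels

theorem digraph_no_odd_cycle_choice_general {V : Type*} [Fintype V] (E : V → V → Prop)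
    (hodd : ¬ HasOddDirectedCycle E) (k : ℕ)
    (S : V → Finset ℕ) (hS : ∀ v, (S v).card = k * (Nat.card {u // E v u} + 1)) :
    ∃ C : V → Finset ℕ, (∀ v, C v ⊆ S v) ∧ (∀ v, (C v).card = k) ∧
      ∀ u v, E u v ∨ E v u → Disjoint (C u) (C v) := by
  classical
  obtain ⟨C, hCS, hCcard, hCdisj⟩ := exists_listColoring_of_isKernel
    (exists_isKernel fun h => hodd h.hasOddDirectedCycle) (fun _ => k) S fun v _ => by
      rw [hS v, sum_const, smul_eq_mul, Nat.card_eq_fintype_card, Fintype.card_subtype]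
      exact (by ring : _ = _).le
  exact ⟨C, hCS, hCcard, fun u v h => h.elim (hCdisj u v) fun h => (hCdisj v u h).symm⟩

theorem digraph_no_odd_cycle_choice {V : Type*} [Fintype V] (E : V → V → Prop)
    (hloop : ∀ v, ¬ E v v) (hodd : ¬ HasOddDirectedCycle E) (k : ℕ) (hk : 1 ≤ k)
    (S : V → Finset ℕ) (hS : ∀ v, (S v).card = k * (Nat.card {u // E v u} + 1)) :
    ∃ C : V → Finset ℕ, (∀ v, C v ⊆ S v) ∧ (∀ v, (C v).card = k) ∧
      ∀ u v, E u v ∨ E v u → Disjoint (C u) (C v) :=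
  digraph_no_odd_cycle_choice_general E hodd k S hS
end

section
/- Let G be a finite simple undirected graph. If G has an orientation D which contains no odd directed (simple) cycle and in which the maximum outdegree is d, then G is (k(d+1):k)-choosable for every positive integer k. -/
/-!
Without odd directed cycles, every induced subdigraph has a kernel, i.e. an independent set into
which every other vertex has an edge (Richardson). Indeed, in a terminal strong component all walks
from a fixed vertex `v` to a vertex `w` have the same parity, so the vertices at even distance from
`v` form a nonempty semikernel, and deleting a semikernel together with its in-neighbours and
recursing completes it to a kernel.

Kernels give list colourings greedily (Bondy, Boppana, Siegel): if `|S v| ≥ f v + ∑_{v → u} f u`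
whenever `f v > 0`, pick a colour `c`, a kernel `K` of the vertices that still need colours and
have `c` in their list, give `c` to `K` and delete it from every list. The inequality survives,
because a vertex of `K` needs one colour less and any other vertex that loses `c` has an
out-neighbour in `K`. For `f ≡ k` and outdegrees at most `d` this asks for lists of size `k (d + 1)`.
-/

open Relation Finset

section

variable {V : Type*}

section OddCycles

open List

variable {E E' : V → V → Prop}

theorem HasOddDirectedCycle.mono (h : ∀ x y, E x y → E' x y) :
    HasOddDirectedCycle E → HasOddDirectedCycle E'
  | ⟨v, l, hnd, hodd, hc⟩ => ⟨v, l, hnd, hodd, IsChain.imp (fun x y => h x y) hc⟩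

theorem isChain_rotate {v x : V} {l₁ l₂ : List V}
    (h : IsChain E (v :: (l₁ ++ x :: (l₂ ++ [v])))) :
    IsChain E (x :: (l₂ ++ v :: (l₁ ++ [x]))) :=
  isChain_cons_split.2 (isChain_cons_split.1 h).symm

theorem exists_shorter_odd_closed_walk_of_mem {v : V} {l : List V}
    (hc : IsChain E (v :: (l ++ [v]))) (hodd : Odd (l.length + 1)) (hv : v ∈ l) :
    ∃ m : List V, m.length < l.length ∧ IsChain E (v :: (m ++ [v])) ∧ Odd (m.length + 1) := by
  obtain ⟨m₁, m₂, rfl⟩ := append_of_mem hv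
  rw [append_assoc, cons_append] at hc
  obtain ⟨hc₁, hc₂⟩ := isChain_cons_split.1 hc
  simp only [length_append, length_cons, Nat.odd_iff] at hodd ⊢
  by_cases h₁ : (m₁.length + 1) % 2 = 1
  · exact ⟨m₁, by omega, hc₁, h₁⟩
  · exact ⟨m₂, by omega, hc₂, by omega⟩

theorem exists_shorter_odd_closed_walk {v : V} {l : List V}
    (hc : IsChain E (v :: (l ++ [v]))) (hodd : Odd (l.length + 1)) (hnd : ¬ (v :: l).Nodup) :
    ∃ w, ∃ m : List V, m.length < l.length ∧ IsChain E (w :: (m ++ [w])) ∧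
      Odd (m.length + 1) := by
  by_cases hv : v ∈ l
  · exact ⟨v, exists_shorter_odd_closed_walk_of_mem hc hodd hv⟩
  -- some `x ≠ v` repeats in `l`; rotate the closed walk to start at `x`
  have hl : ¬ l.Nodup := fun h => hnd (nodup_cons.2 ⟨hv, h⟩)
  obtain ⟨x, hx⟩ : ∃ x, [x, x] <+ l := by simpa [nodup_iff_sublist] using hl
  obtain ⟨r₁, r₂, rfl, hx₁, hx₂⟩ := cons_sublist_iff.1 hx
  obtain ⟨s, t, rfl⟩ := append_of_mem hx₁
  have hrot : IsChain E (x :: ((t ++ r₂ ++ v :: s) ++ [x])) := by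
    simpa using isChain_rotate (l₁ := s) (l₂ := t ++ r₂) (by simpa using hc)
  have hlen : (t ++ r₂ ++ v :: s).length = (s ++ x :: t ++ r₂).length := by simp; omega
  rw [← hlen] at hodd ⊢
  exact ⟨x, exists_shorter_odd_closed_walk_of_mem hrot hodd (by simp [singleton_sublist.1 hx₂])⟩

theorem hasOddDirectedCycle_of_odd_closed_walk {v : V} {l : List V}
    (hc : IsChain E (v :: (l ++ [v]))) (hodd : Odd (l.length + 1)) : HasOddDirectedCycle E := by
  induction h : l.length using Nat.strong_induction_on generalizing v l with
  | _ n ih =>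
  by_cases hnd : (v :: l).Nodup
  · exact ⟨v, l, hnd, hodd, hc⟩
  · obtain ⟨w, m, hlt, hm, hmodd⟩ := exists_shorter_odd_closed_walk hc hodd hnd
    exact ih _ (h ▸ hlt) hm hmodd rfl

end OddCycles

section ParityWalks

open List

variable {E : V → V → Prop}

/-- The bipartite double cover of `E`: the `Bool` records the parity of the length of a walk. -/
def ParityStep (E : V → V → Prop) (p q : V × Bool) : Prop :=
  E p.1 q.1 ∧ q.2 = !p.2

theorem exists_isChain_of_parityStep {p q : V × Bool} (h : ReflTransGen (ParityStep E) p q) :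
    p = q ∨ ∃ l : List V, IsChain E (p.1 :: (l ++ [q.1])) ∧ (Odd (l.length + 1) ↔ p.2 ≠ q.2) := by
  induction h with
  | refl => exact .inl rfl
  | @tail b c _ hbc ih =>
    refine .inr ?_
    rcases ih with rfl | ⟨l, hl, hpar⟩
    · exact ⟨[], by simpa using hbc.1, by simp [hbc.2]⟩
    · refine ⟨l ++ [b.1], ?_, ?_⟩
      · rw [append_assoc, singleton_append]
        exact isChain_cons_split.2 ⟨hl, isChain_pair.2 hbc.1⟩
      · rw [length_append, length_singleton, Nat.odd_add_one, hpar, hbc.2]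
        cases p.2 <;> cases b.2 <;> simp

theorem hasOddDirectedCycle_of_parityStep {v : V}
    (h : ReflTransGen (ParityStep E) (v, false) (v, true)) : HasOddDirectedCycle E := by
  rcases exists_isChain_of_parityStep h with h | ⟨l, hc, hodd⟩
  · simp at h
  · exact hasOddDirectedCycle_of_odd_closed_walk hc (by simpa using hodd)

theorem exists_parityStep_of_reflTransGen {a c : V} (h : ReflTransGen E a c) :
    ∃ p : Bool, ∀ b : Bool, ReflTransGen (ParityStep E) (a, b) (c, xor b p) := by
  induction h with
  | refl => exact ⟨false, fun b => by simpa using ReflTransGen.refl⟩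
  | tail _ hbc ih =>
    obtain ⟨p, hp⟩ := ih
    exact ⟨!p, fun b => (hp b).tail ⟨hbc, by cases b <;> cases p <;> rfl⟩⟩

end ParityWalks

section Kernels

variable {E : V → V → Prop}

structure IsKernel_s5 (E : V → V → Prop) (A K : Finset V) : Prop where
  subset : K ⊆ A
  independent : ∀ x ∈ K, ∀ y ∈ K, ¬ E x y
  absorbing : ∀ v ∈ A, v ∉ K → ∃ u ∈ K, E v u

structure IsSemikernel (E : V → V → Prop) (A S : Finset V) : Prop where
  subset : S ⊆ A
  independent : ∀ x ∈ S, ∀ y ∈ S, ¬ E x y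
  absorbing_out : ∀ x ∈ S, ∀ y ∈ A, E x y → ∃ u ∈ S, E y u

theorem exists_isKernel_of_isSemikernel
    (h : ∀ B : Finset V, B.Nonempty → ∃ S, S.Nonempty ∧ IsSemikernel E B S) (A : Finset V) :
    ∃ K, IsKernel_s5 E A K := by
  classical
  induction A using Finset.strongInduction with
  | _ A ih =>
  rcases A.eq_empty_or_nonempty with rfl | hA
  · exact ⟨∅, subset_refl _, by simp, by simp⟩
  obtain ⟨S, ⟨s, hs⟩, hS⟩ := h A hA
  set A' := A.filter fun w => w ∉ S ∧ ∀ u ∈ S, ¬ E w u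
  obtain ⟨K, hK⟩ := ih A' (filter_ssubset.2 ⟨s, hS.subset hs, fun h => h.1 hs⟩)
  have hKA : ∀ w ∈ K, w ∈ A ∧ w ∉ S ∧ ∀ u ∈ S, ¬ E w u := fun w hw => mem_filter.1 (hK.subset hw)
  refine ⟨S ∪ K, union_subset hS.subset fun w hw => (hKA w hw).1, ?_, ?_⟩
  · simp only [mem_union]
    rintro x (hx | hx) y (hy | hy) hxy
    · exact hS.independent x hx y hy hxy
    · obtain ⟨u, hu, hyu⟩ := hS.absorbing_out x hx y (hKA y hy).1 hxy
      exact (hKA y hy).2.2 u hu hyu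
    · exact (hKA x hx).2.2 y hy hxy
    · exact hK.independent x hx y hy hxy
  · intro w hw hwK
    simp only [mem_union, not_or] at hwK
    by_cases hN : ∃ u ∈ S, E w u
    · obtain ⟨u, hu, hwu⟩ := hN
      exact ⟨u, mem_union_left _ hu, hwu⟩
    · push Not at hN
      obtain ⟨u, hu, hwu⟩ := hK.absorbing w (mem_filter.2 ⟨hw, hwK.1, hN⟩) hwK.2
      exact ⟨u, mem_union_right _ hu, hwu⟩

theorem Finset.exists_mem_forall_reflTransGen_imp (R : V → V → Prop) {A : Finset V}
    (hA : A.Nonempty) : ∃ v ∈ A, ∀ w ∈ A, ReflTransGen R v w → ReflTransGen R w v := by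
  classical
  obtain ⟨v, hvA, hmin⟩ := A.exists_min_image (fun w => #(A.filter (ReflTransGen R w))) hA
  refine ⟨v, hvA, fun w hwA hvw => ?_⟩
  have hsub : A.filter (ReflTransGen R w) ⊆ A.filter (ReflTransGen R v) :=
    fun u hu => mem_filter.2 ⟨(mem_filter.1 hu).1, hvw.trans (mem_filter.1 hu).2⟩
  have heq := eq_of_subset_of_card_le hsub (hmin w hwA)
  exact (mem_filter.1 (heq ▸ mem_filter.2 ⟨hvA, ReflTransGen.refl⟩)).2

-- The vertices at even distance from a vertex `v` of a terminal strong component of `B`.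
theorem exists_isSemikernel (hodd : ¬ HasOddDirectedCycle E) {B : Finset V} (hB : B.Nonempty) :
    ∃ S, S.Nonempty ∧ IsSemikernel E B S := by
  classical
  set EB : V → V → Prop := fun x y => E x y ∧ y ∈ B
  have hoddB : ¬ HasOddDirectedCycle EB := fun h => hodd (h.mono fun _ _ h => h.1)
  obtain ⟨v, hvB, hv⟩ := B.exists_mem_forall_reflTransGen_imp EB hB
  set R : V × Bool → Prop := ReflTransGen (ParityStep EB) (v, false)
  have hback : ∀ w ∈ B, ∀ b, R (w, b) → ReflTransGen EB w v := fun w hw b h =>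
    hv w hw (h.lift Prod.fst fun _ _ h => h.1)
  have hparity : ∀ w ∈ B, R (w, true) → ¬ R (w, false) := by
    intro w hw h₁ h₀
    obtain ⟨p, hp⟩ := exists_parityStep_of_reflTransGen (hback w hw _ h₀)
    cases p
    · exact hoddB (hasOddDirectedCycle_of_parityStep (h₁.trans (hp true)))
    · exact hoddB (hasOddDirectedCycle_of_parityStep (h₀.trans (hp false)))
  refine ⟨B.filter fun w => R (w, false), ⟨v, mem_filter.2 ⟨hvB, ReflTransGen.refl⟩⟩,
    filter_subset _ _, ?_, ?_⟩
  · intro x hx y hy hxy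
    rw [mem_filter] at hx hy
    exact hparity y hy.1 (hx.2.tail ⟨⟨hxy, hy.1⟩, rfl⟩) hy.2
  · intro x hx y hyB hxy
    have hy : R (y, true) := (mem_filter.1 hx).2.tail ⟨⟨hxy, hyB⟩, rfl⟩
    rcases (hback y hyB _ hy).cases_head with rfl | ⟨u, hyu, -⟩
    · exact absurd (hasOddDirectedCycle_of_parityStep hy) hoddB
    · exact ⟨u, mem_filter.2 ⟨hyu.2, hy.tail ⟨hyu, rfl⟩⟩, hyu.1⟩

theorem exists_isKernel_of_not_hasOddDirectedCycle (hodd : ¬ HasOddDirectedCycle E)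
    (A : Finset V) : ∃ K, IsKernel_s5 E A K :=
  exists_isKernel_of_isSemikernel (fun _ hB => exists_isSemikernel hodd hB) A

end Kernels

structure IsListColoring {α : Type*} (E : V → V → Prop) (S : V → Finset α) (f : V → ℕ)
    (C : V → Finset α) : Prop where
  subset : ∀ v, C v ⊆ S v
  card : ∀ v, #(C v) = f v
  disjoint : ∀ u v, E u v → Disjoint (C u) (C v)

section KernelMethod

variable [Fintype V] {α : Type*}

def ListsCoverOutWeight (E : V → V → Prop) [DecidableRel E] (S : V → Finset α) (f : V → ℕ) :
    Prop :=
  ∀ v, 0 < f v → f v + ∑ u with E v u, f u ≤ #(S v)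

variable [DecidableEq V] [DecidableEq α] {E : V → V → Prop} {S : V → Finset α} {f : V → ℕ}
  {c : α} {K : Finset V}

theorem IsListColoring.insert (hK : IsKernel_s5 E {v | 0 < f v ∧ c ∈ S v} K) {C : V → Finset α}
    (hC : IsListColoring E (fun v => (S v).erase c) (fun v => f v - if v ∈ K then 1 else 0) C) :
    IsListColoring E S f fun v => if v ∈ K then insert c (C v) else C v := by
  have hT : ∀ v ∈ K, 0 < f v ∧ c ∈ S v := fun v hv => (mem_filter.1 (hK.subset hv)).2
  have hcC : ∀ v, c ∉ C v := fun v hcv => (mem_erase.1 (hC.subset v hcv)).1 rfl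
  refine ⟨fun v => ?_, fun v => ?_, fun u v huv => ?_⟩
  · have := (hC.subset v).trans (erase_subset c (S v))
    split_ifs with hv
    · exact insert_subset (hT v hv).2 this
    · exact this
  · have := hC.card v
    split_ifs at this ⊢ with hv
    · have := (hT v hv).1
      rw [card_insert_of_notMem (hcC v)]
      omega
    · exact this
  · have hdis := hC.disjoint u v huv
    split_ifs with hu hv hv
    · exact absurd huv (hK.independent u hu v hv)
    · exact disjoint_insert_left.2 ⟨hcC v, hdis⟩
    · exact disjoint_insert_right.2 ⟨hcC u, hdis⟩
    · exact hdis

variable [DecidableRel E]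

theorem ListsCoverOutWeight.erase (hS : ListsCoverOutWeight E S f)
    (hK : IsKernel_s5 E {v | 0 < f v ∧ c ∈ S v} K) :
    ListsCoverOutWeight E (fun v => (S v).erase c) (fun v => f v - if v ∈ K then 1 else 0) := by
  intro v hv
  simp only at hv ⊢
  have hf : ∀ u, f u = (f u - if u ∈ K then 1 else 0) + if u ∈ K then 1 else 0 := fun u => by
    split_ifs with hu
    · have := (mem_filter.1 (hK.subset hu)).2.1
      omega
    · rfl
  have hsum : ∑ u with E v u, f u =
      ∑ u with E v u, (f u - if u ∈ K then 1 else 0) + #{u | E v u ∧ u ∈ K} := by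
    conv_lhs => rw [sum_congr rfl fun u _ => hf u]
    rw [sum_add_distrib, sum_boole, filter_filter]
    rfl
  have hfv : 0 < f v := by omega
  have hbound := hS v hfv
  have hfv' := hf v
  by_cases hc : c ∈ S v
  · have hgain : 1 ≤ (if v ∈ K then 1 else 0) + #{u | E v u ∧ u ∈ K} := by
      by_cases hvK : v ∈ K
      · simp [hvK]
      · obtain ⟨u, huK, hvu⟩ := hK.absorbing v (by simp [hfv, hc]) hvK
        have : 0 < #{u | E v u ∧ u ∈ K} := card_pos.2 ⟨u, by simp [hvu, huK]⟩
        omega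
    have := card_erase_add_one hc
    omega
  · rw [erase_eq_of_notMem hc]
    omega

theorem exists_isListColoring_of_isKernel (hker : ∀ A : Finset V, ∃ K, IsKernel_s5 E A K)
    (S : V → Finset α) (f : V → ℕ) (hS : ListsCoverOutWeight E S f) :
    ∃ C, IsListColoring E S f C := by
  by_cases hf : ∀ v, f v = 0
  · exact ⟨fun _ => ∅, fun _ => empty_subset _, fun v => (hf v).symm ▸ card_empty, by simp⟩
  push Not at hf
  obtain ⟨v₀, hv₀⟩ := hf
  obtain ⟨c, hc⟩ : (S v₀).Nonempty := card_pos.1 (by have := hS v₀ (by omega); omega)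
  obtain ⟨K, hK⟩ := hker {v | 0 < f v ∧ c ∈ S v}
  have hfK : ∀ v ∈ K, 0 < f v := fun v hv => (mem_filter.1 (hK.subset hv)).2.1
  have hKne : K.Nonempty := by
    by_cases hv₀K : v₀ ∈ K
    · exact ⟨v₀, hv₀K⟩
    · obtain ⟨u, hu, -⟩ := hK.absorbing v₀ (by simp [Nat.pos_of_ne_zero hv₀, hc]) hv₀K
      exact ⟨u, hu⟩
  have hdec : ∑ v, (f v - if v ∈ K then 1 else 0) < ∑ v, f v := by
    obtain ⟨w, hw⟩ := hKne
    refine sum_lt_sum (fun v _ => Nat.sub_le _ _) ⟨w, mem_univ w, ?_⟩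
    have := hfK w hw
    simp only [hw, if_true]
    omega
  obtain ⟨C, hC⟩ := exists_isListColoring_of_isKernel hker _ _ (hS.erase hK)
  exact ⟨_, hC.insert hK⟩
termination_by ∑ v, f v

end KernelMethod

end

theorem choosable_of_orientation_no_odd_cycle_general {V : Type*} [Fintype V] (G : SimpleGraph V)
    (E : V → V → Prop)
    (horient : ∀ u v, G.Adj u v ↔ E u v ∨ E v u)
    (hodd : ¬ HasOddDirectedCycle E)
    (d : ℕ) (hdeg : ∀ v, Nat.card {u // E v u} ≤ d)
    (k : ℕ) :
    G.Choosable (k * (d + 1)) k := by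
  classical
  intro S hS
  have hweight : ListsCoverOutWeight E S fun _ => k := fun v _ => by
    have hout : #{u | E v u} ≤ d := by
      simpa [Nat.card_eq_fintype_card, Fintype.card_subtype] using hdeg v
    rw [sum_const, smul_eq_mul, hS v]
    nlinarith
  obtain ⟨C, hC⟩ := exists_isListColoring_of_isKernel
    (exists_isKernel_of_not_hasOddDirectedCycle hodd) S _ hweight
  refine ⟨C, hC.subset, hC.card, fun u v huv => ?_⟩
  rcases (horient u v).1 huv with h | h
  · exact hC.disjoint u v h
  · exact (hC.disjoint v u h).symm

theorem choosable_of_orientation_no_odd_cycle {V : Type*} [Fintype V] (G : SimpleGraph V)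
    (E : V → V → Prop)
    (horient : ∀ u v, G.Adj u v ↔ E u v ∨ E v u)
    (hanti : ∀ u v, E u v → ¬ E v u)
    (hodd : ¬ HasOddDirectedCycle E)
    (d : ℕ) (hdeg : ∀ v, Nat.card {u // E v u} ≤ d)
    (k : ℕ) (hk : 0 < k) :
    G.Choosable (k * (d + 1)) k :=
  choosable_of_orientation_no_odd_cycle_general G E horient hodd d hdeg k
end

section
/- Every even cycle C_{2n} (n ≥ 2) is (2k:k)-choosable for every positive integer k. -/
/-!
Kernel method. Orient `C_{2n}` as the directed cycle `v → v + 1`.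
Every vertex set `U` has a kernel `K` (independent, and every vertex of `U \ K` points into `K`):
the even vertices if `U` is everything, otherwise the vertices whose distance to the first vertex
after them outside `U` is odd. More generally than `b ≡ k`, demands `b v` can be met from lists
with `b v + b (v + 1) ≤ |S v|`; induct on `∑ b`: pick a colour `c`, give it to a kernel of the
vertices that have `c` and still demand something, and delete `c` from their lists. Every such
vertex is in `K` or points into `K`, so its inequality survives.
-/

open Finset

variable {V : Type*}

structure IsKernel_s6 (f : V → V) (U K : Set V) : Prop where
  subset : K ⊆ U
  independent : ∀ v ∈ K, f v ∉ K
  absorbing : ∀ v ∈ U, v ∉ K → f v ∈ K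

theorem IsKernel_s6.nonempty {f : V → V} {U K : Set V} (hK : IsKernel_s6 f U K) (hU : U.Nonempty) :
    K.Nonempty := by
  obtain ⟨v, hv⟩ := hU
  by_cases hvK : v ∈ K
  · exact ⟨v, hvK⟩
  · exact ⟨f v, hK.absorbing v hv hvK⟩

theorem exists_isKernel_of_forall_exists_iterate_notMem {f : V → V} {U : Set V}
    (h : ∀ v, ∃ j, f^[j] v ∉ U) : ∃ K, IsKernel_s6 f U K := by
  classical
  set t : V → ℕ := fun v => Nat.find (h v)
  have t_eq_succ : ∀ v ∈ U, t v = t (f v) + 1 := fun v hv =>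
    Nat.find_comp_succ (h v) (h (f v)) (not_not.mpr hv)
  have mem_of_odd : ∀ v, Odd (t v) → v ∈ U := fun v hv => by
    by_contra hvU
    rw [show t v = 0 from (Nat.find_eq_zero (h v)).mpr hvU] at hv
    exact Nat.not_odd_zero hv
  refine ⟨{v | Odd (t v)}, mem_of_odd, fun v (hv : Odd (t v)) hfv => ?_,
    fun v hv (hnv : ¬Odd (t v)) => ?_⟩
  · rw [t_eq_succ v (mem_of_odd v hv), Nat.odd_add_one] at hv
    exact hv hfv
  · rwa [t_eq_succ v hv, Nat.odd_add_one, not_not] at hnv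

theorem isKernel_finRotate_univ {m : ℕ} (hm : Even m) :
    IsKernel_s6 (finRotate m) Set.univ {v | Even v.val} := by
  suffices h : ∀ v : Fin m, Even (finRotate m v).val ↔ ¬Even v.val from
    ⟨Set.subset_univ _, fun v hv hfv => (h v).mp hfv hv, fun v _ hv => (h v).mpr hv⟩
  intro v
  obtain ⟨n, rfl⟩ := Nat.exists_eq_succ_of_ne_zero v.pos.ne'
  rw [coe_finRotate]
  split_ifs with hv
  · rw [hv, Fin.val_last]
    exact iff_of_true Even.zero (Nat.even_add_one.mp hm)
  · exact Nat.even_add_one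

theorem exists_iterate_finRotate_eq {m : ℕ} (u z : Fin m) : ∃ j, (finRotate m)^[j] u = z := by
  have := z.neZero
  exact ⟨(z - u).val, by rw [← finCycle_eq_finRotate_iterate, finCycle_apply, add_sub_cancel]⟩

theorem exists_isKernel_finRotate {m : ℕ} (hm : Even m) (U : Set (Fin m)) :
    ∃ K, IsKernel_s6 (finRotate m) U K := by
  by_cases hU : U = Set.univ
  · exact ⟨_, hU ▸ isKernel_finRotate_univ hm⟩
  · obtain ⟨z, hz⟩ := (Set.ne_univ_iff_exists_notMem U).mp hU
    refine exists_isKernel_of_forall_exists_iterate_notMem fun u => ?_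
    obtain ⟨j, hj⟩ := exists_iterate_finRotate_eq u z
    exact ⟨j, hj ▸ hz⟩

structure IsListAssignment (f : V → V) (S : V → Finset ℕ) (b : V → ℕ)
    (C : V → Finset ℕ) : Prop where
  subset : ∀ v, C v ⊆ S v
  card_eq : ∀ v, (C v).card = b v
  disjoint : ∀ v, Disjoint (C v) (C (f v))

-- A vertex without demand lies outside the kernel's domain, so it could not afford to lose `c`.
def eraseColor (S : V → Finset ℕ) (b : V → ℕ) (c : ℕ) (v : V) : Finset ℕ :=
  if b v = 0 then S v else (S v).erase c

section ColorRemoval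

variable {f : V → V} {S : V → Finset ℕ} {b : V → ℕ} {c : ℕ} {K : Set V}

theorem IsKernel_s6.add_le_card_eraseColor (hK : IsKernel_s6 f {v | c ∈ S v ∧ 0 < b v} K)
    (hS : ∀ v, b v + b (f v) ≤ (S v).card) (v : V) :
    b v - K.indicator 1 v + (b (f v) - K.indicator 1 (f v)) ≤ (eraseColor S b c v).card := by
  have hle : ∀ w, b w - K.indicator 1 w ≤ b w := fun w => Nat.sub_le _ _
  have hSv := hS v
  unfold eraseColor
  split_ifs with hbv
  · have := hle (f v); omega
  by_cases hcv : c ∈ S v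
  · rw [card_erase_of_mem hcv]
    have hvU : v ∈ {v | c ∈ S v ∧ 0 < b v} := ⟨hcv, Nat.pos_of_ne_zero hbv⟩
    by_cases hvK : v ∈ K
    · have := hle (f v)
      simp only [Set.indicator_of_mem hvK, Pi.one_apply]
      omega
    · have hfvK := hK.absorbing v hvU hvK
      have := (hK.subset hfvK).2
      simp only [Set.indicator_of_mem hfvK, Set.indicator_of_notMem hvK, Pi.one_apply]
      omega
  · rw [erase_eq_of_notMem hcv]
    have := hle (f v); have := hle v; omega

open Classical in
theorem IsListAssignment.insert_of_isKernel {C : V → Finset ℕ}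
    (hK : IsKernel_s6 f {v | c ∈ S v ∧ 0 < b v} K)
    (hC : IsListAssignment f (eraseColor S b c) (fun v => b v - K.indicator 1 v) C) :
    IsListAssignment f S b (fun v => if v ∈ K then insert c (C v) else C v) := by
  have hCS : ∀ v, C v ⊆ S v := fun v =>
    (hC.subset v).trans (by unfold eraseColor; split_ifs; exacts [subset_rfl, erase_subset c _])
  have hcC : ∀ v, c ∉ C v := by
    intro v hcv
    by_cases hbv : b v = 0
    · have hvK : v ∉ K := fun hvK => (hK.subset hvK).2.ne' hbv
      have hCv := hC.card_eq v
      rw [Set.indicator_of_notMem hvK, hbv, Nat.sub_zero, card_eq_zero] at hCv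
      exact notMem_empty c (hCv ▸ hcv)
    · simpa [eraseColor, hbv] using hC.subset v hcv
  refine ⟨fun v => ?_, fun v => ?_, fun v => ?_⟩
  · split_ifs with hvK
    exacts [insert_subset (hK.subset hvK).1 (hCS v), hCS v]
  · have hCv := hC.card_eq v
    split_ifs with hvK
    · rw [card_insert_of_notMem (hcC v), hCv, Set.indicator_of_mem hvK, Pi.one_apply]
      exact Nat.sub_add_cancel (hK.subset hvK).2
    · rwa [Set.indicator_of_notMem hvK, Nat.sub_zero] at hCv
  · have := hC.disjoint v
    split_ifs with hvK hfvK hfvK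
    · exact absurd hfvK (hK.independent v hvK)
    · exact disjoint_insert_left.mpr ⟨hcC (f v), this⟩
    · exact disjoint_insert_right.mpr ⟨hcC v, this⟩
    · exact this

end ColorRemoval

theorem sum_sub_indicator_lt [Fintype V] {b : V → ℕ} {K : Set V} (hK : ∃ v ∈ K, 0 < b v) :
    ∑ v, (b v - K.indicator 1 v) < ∑ v, b v := by
  obtain ⟨w, hwK, hbw⟩ := hK
  refine sum_lt_sum (fun v _ => Nat.sub_le _ _) ⟨w, mem_univ w, ?_⟩
  rw [Set.indicator_of_mem hwK, Pi.one_apply]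
  omega

theorem exists_isListAssignment_of_isKernel [Fintype V] {f : V → V}
    (hker : ∀ U : Set V, ∃ K, IsKernel_s6 f U K) (S : V → Finset ℕ) (b : V → ℕ)
    (hS : ∀ v, b v + b (f v) ≤ (S v).card) : ∃ C, IsListAssignment f S b C := by
  induction hN : ∑ v, b v using Nat.strong_induction_on generalizing b S with
  | _ N ih =>
  obtain hb | ⟨v₀, hv₀⟩ := forall_or_exists_not fun v => b v = 0
  · exact ⟨fun _ => ∅, ⟨fun v => empty_subset _, fun v => (hb v).symm ▸ card_empty,
      fun v => disjoint_empty_left _⟩⟩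
  obtain ⟨c, hc⟩ : (S v₀).Nonempty := card_pos.mp (by have := hS v₀; omega)
  obtain ⟨K, hK⟩ := hker {v | c ∈ S v ∧ 0 < b v}
  have hsum : ∑ v, (b v - K.indicator 1 v) < N := by
    obtain ⟨w, hw⟩ := hK.nonempty ⟨v₀, hc, Nat.pos_of_ne_zero hv₀⟩
    exact hN ▸ sum_sub_indicator_lt ⟨w, hw, (hK.subset hw).2⟩
  obtain ⟨C, hC⟩ := ih _ hsum _ _ (hK.add_le_card_eraseColor hS) rfl
  exact ⟨_, hC.insert_of_isKernel hK⟩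

theorem SimpleGraph.eq_finRotate_or_eq_finRotate_of_cycleGraph_adj {m : ℕ} {u v : Fin m} :
    (cycleGraph m).Adj u v → v = finRotate m u ∨ u = finRotate m v := by
  match m with
  | 0 => exact u.elim0
  | 1 => exact fun h => (cycleGraph_one_adj h).elim
  | n + 2 =>
    rw [cycleGraph_adj, finRotate_apply, finRotate_apply, sub_eq_iff_eq_add, sub_eq_iff_eq_add,
      add_comm u, add_comm v]
    exact Or.symm

theorem evenCycle_choosable_general (n : ℕ) (k : ℕ) :
    (SimpleGraph.cycleGraph (2 * n)).Choosable (2 * k) k := by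
  intro S hS
  obtain ⟨C, hC⟩ := exists_isListAssignment_of_isKernel
    (exists_isKernel_finRotate (even_two_mul n)) S (fun _ => k) fun v => by rw [hS v, two_mul]
  refine ⟨C, hC.subset, hC.card_eq, fun u v huv => ?_⟩
  rcases SimpleGraph.eq_finRotate_or_eq_finRotate_of_cycleGraph_adj huv with rfl | rfl
  exacts [hC.disjoint u, (hC.disjoint v).symm]

theorem evenCycle_choosable (n : ℕ) (hn : 2 ≤ n) (k : ℕ) (hk : 0 < k) :
    (SimpleGraph.cycleGraph (2 * n)).Choosable (2 * k) k :=
  evenCycle_choosable_general n k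
end

section
/- Every finite bipartite simple graph G is (k(⌈M(G)⌉ + 1):k)-choosable for every positive integer k, where M(G) = max |E(H)|/|V(H)| taken over all subgraphs H of G with at least one vertex. -/
open Finset

section

variable {V α : Type*} {R : V → V → Prop} {L : V → Finset α} {dem : V → ℕ}

structure IsKernel_s8 (R : V → V → Prop) (T K : Set V) : Prop where
  subset : K ⊆ T
  independent : ∀ u ∈ K, ∀ v ∈ K, ¬ R u v
  absorbing : ∀ v ∈ T, v ∉ K → ∃ w ∈ K, R v w

theorem IsKernel_s8.nonempty {T K : Set V} (hK : IsKernel_s8 R T K)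
    (hT : T.Nonempty) : K.Nonempty := by
  obtain ⟨v, hv⟩ := hT
  by_cases hvK : v ∈ K
  · exact ⟨v, hvK⟩
  · obtain ⟨w, hw, -⟩ := hK.absorbing v hv hvK
    exact ⟨w, hw⟩

theorem exists_isKernel_of_bipartite (A : Set V)
    (hR : ∀ u v, R u v → (u ∈ A ↔ v ∉ A)) (T : Set V) : ∃ K, IsKernel_s8 R T K := by
  let free (S : Set V) : Set V := {b | b ∈ T \ A ∧ ∀ s ∈ S, ¬ R b s}
  have free_anti : Antitone free := fun S S' hS b hb => ⟨hb.1, fun s hs => hb.2 s (hS hs)⟩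
  let g : Set V →o Set V :=
    ⟨fun S => {a | a ∈ T ∩ A ∧ ∀ b ∈ free S, ¬ R a b},
      fun S S' hS a ha => ⟨ha.1, fun b hb => ha.2 b (free_anti hS hb)⟩⟩
  -- Any fixed point `S` of `g` gives the kernel `S ∪ free S`; Knaster–Tarski provides one.
  set S := g.lfp
  have hS : g S = S := g.map_lfp
  have hSA : ∀ a ∈ S, a ∈ T ∩ A := fun a ha => (hS.symm ▸ ha : a ∈ g S).1
  refine ⟨S ∪ free S, ?_, ?_, ?_⟩
  · rintro v (hv | hv)
    exacts [(hSA v hv).1, hv.1.1]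
  · rintro u (hu | hu) v (hv | hv) huv
    · exact (hR u v huv).1 (hSA u hu).2 (hSA v hv).2
    · exact (hS.symm ▸ hu : u ∈ g S).2 v hv huv
    · exact hu.2 v hv huv
    · exact hu.1.2 ((hR u v huv).2 hv.1.2)
  · intro v hvT hvK
    by_cases hvA : v ∈ A
    · have hvS : v ∉ g S := by rw [hS]; exact fun h => hvK (Or.inl h)
      have : ¬ ∀ b ∈ free S, ¬ R v b := fun h => hvS ⟨⟨hvT, hvA⟩, h⟩
      push Not at this
      obtain ⟨b, hb, hvb⟩ := this
      exact ⟨b, Or.inr hb, hvb⟩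
    · have : ¬ ∀ a ∈ S, ¬ R v a := fun h => hvK (Or.inr ⟨⟨hvT, hvA⟩, h⟩)
      push Not at this
      obtain ⟨a, ha, hva⟩ := this
      exact ⟨a, Or.inl ha, hva⟩

def DemandColorable (R : V → V → Prop) (L : V → Finset α) (dem : V → ℕ) : Prop :=
  ∃ C : V → Finset α, (∀ v, C v ⊆ L v) ∧ (∀ v, #(C v) = dem v) ∧
    ∀ u v, R u v → Disjoint (C u) (C v)

theorem DemandColorable.of_forall_eq_zero (hdem : ∀ v, dem v = 0) : DemandColorable R L dem :=
  ⟨fun _ => ∅, fun _ => empty_subset _, fun v => (hdem v).symm ▸ card_empty,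
    fun _ _ _ => disjoint_empty_left _⟩

theorem DemandColorable.of_forall_or {R' : V → V → Prop} (h : DemandColorable R L dem)
    (hR : ∀ u v, R' u v → R u v ∨ R v u) :
    DemandColorable R' L dem := by
  obtain ⟨C, hCL, hCcard, hCdisj⟩ := h
  refine ⟨C, hCL, hCcard, fun u v huv => ?_⟩
  rcases hR u v huv with h | h
  exacts [hCdisj u v h, (hCdisj v u h).symm]

theorem sub_indicator_one_apply_lt {K : Set V} {v : V} (hv : v ∈ K)
    (hdem : dem v ≠ 0) : (dem - K.indicator 1 : V → ℕ) v < dem v := by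
  simp only [Pi.sub_apply, Set.indicator_of_mem hv, Pi.one_apply]
  omega

section KernelStep

variable [DecidableEq α] {c : α} {K : Set V}

theorem IsKernel_s8.demandColorable_of_erase (hK : IsKernel_s8 R {v | dem v ≠ 0 ∧ c ∈ L v} K)
    (h : DemandColorable R (fun v => (L v).erase c) (dem - K.indicator 1)) :
    DemandColorable R L dem := by
  classical
  obtain ⟨C, hCL, hCcard, hCdisj⟩ := h
  have hc : ∀ v, c ∉ C v := fun v hcv => notMem_erase c (L v) (hCL v hcv)
  refine ⟨fun v => if v ∈ K then insert c (C v) else C v, fun v => ?_, fun v => ?_,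
    fun u v huv => ?_⟩
  · have hCv : C v ⊆ L v := (hCL v).trans (erase_subset c (L v))
    dsimp only
    split_ifs with hv
    exacts [insert_subset (hK.subset hv).2 hCv, hCv]
  · have := hCcard v
    dsimp only
    split_ifs with hv
    · have := (hK.subset hv).1
      rw [card_insert_of_notMem (hc v)]
      simp_all only [Pi.sub_apply, Set.indicator_of_mem hv, Pi.one_apply]
      omega
    · simpa only [Pi.sub_apply, Set.indicator_of_notMem hv, tsub_zero] using this
  · have hdisj := hCdisj u v huv
    dsimp only
    split_ifs with hu hv hv
    · exact absurd huv (hK.independent u hu v hv)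
    · exact disjoint_insert_left.2 ⟨hc v, hdisj⟩
    · exact disjoint_insert_right.2 ⟨hc u, hdisj⟩
    · exact hdisj

variable [Fintype V] [DecidableRel R]

theorem IsKernel_s8.add_sum_le_card_erase (hK : IsKernel_s8 R {v | dem v ≠ 0 ∧ c ∈ L v} K)
    (hL : ∀ v, dem v ≠ 0 → dem v + ∑ w with R v w, dem w ≤ #(L v)) (v : V)
    (hv : (dem - K.indicator 1 : V → ℕ) v ≠ 0) :
    (dem - K.indicator 1 : V → ℕ) v + ∑ w with R v w, (dem - K.indicator 1 : V → ℕ) w ≤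
      #((L v).erase c) := by
  have hle : ∀ w, (dem - K.indicator 1 : V → ℕ) w ≤ dem w := fun w => tsub_le_self
  have hdv : dem v ≠ 0 := fun h => hv (Nat.eq_zero_of_le_zero (h ▸ hle v))
  have hsum : ∑ w with R v w, (dem - K.indicator 1 : V → ℕ) w ≤ ∑ w with R v w, dem w :=
    sum_le_sum fun w _ => hle w
  have hLv := hL v hdv
  by_cases hc : c ∈ L v
  · rw [card_erase_of_mem hc]
    by_cases hvK : v ∈ K
    · have := sub_indicator_one_apply_lt hvK hdv
      omega
    · obtain ⟨w, hwK, hvw⟩ := hK.absorbing v ⟨hdv, hc⟩ hvK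
      have hlt : ∑ w with R v w, (dem - K.indicator 1 : V → ℕ) w < ∑ w with R v w, dem w :=
        sum_lt_sum (fun w _ => hle w)
          ⟨w, mem_filter.2 ⟨mem_univ w, hvw⟩,
            sub_indicator_one_apply_lt hwK (hK.subset hwK).1⟩
      have : (dem - K.indicator 1 : V → ℕ) v = dem v := by
        simp only [Pi.sub_apply, Set.indicator_of_notMem hvK, tsub_zero]
      omega
  · rw [erase_eq_of_notMem hc]
    have := hle v
    omega

end KernelStep

theorem demandColorable_of_bipartite [Fintype V] [DecidableEq α] [DecidableRel R] (A : Set V)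
    (hR : ∀ u v, R u v → (u ∈ A ↔ v ∉ A))
    (hL : ∀ v, dem v ≠ 0 → dem v + ∑ w with R v w, dem w ≤ #(L v)) :
    DemandColorable R L dem := by
  induction h : ∑ v, dem v using Nat.strong_induction_on generalizing dem L with
  | _ n ih =>
  by_cases hzero : ∀ v, dem v = 0
  · exact .of_forall_eq_zero hzero
  push Not at hzero
  obtain ⟨v₀, hv₀⟩ := hzero
  obtain ⟨c, hc⟩ : (L v₀).Nonempty := card_pos.1 (by have := hL v₀ hv₀; omega)
  obtain ⟨K, hK⟩ := exists_isKernel_of_bipartite A hR {v | dem v ≠ 0 ∧ c ∈ L v}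
  obtain ⟨w, hw⟩ := hK.nonempty ⟨v₀, hv₀, hc⟩
  refine hK.demandColorable_of_erase (ih _ ?_ (hK.add_sum_le_card_erase hL) rfl)
  exact h ▸ sum_lt_sum (fun v _ => tsub_le_self)
    ⟨w, mem_univ w, sub_indicator_one_apply_lt hw (hK.subset hw).1⟩

namespace SimpleGraph

variable {G : SimpleGraph V}

theorem IsBipartiteWith.mem_iff_notMem_of_adj {s t : Set V} {u v : V}
    (h : G.IsBipartiteWith s t) (huv : G.Adj u v) : u ∈ s ↔ v ∉ s := by
  rcases h.mem_of_adj huv with ⟨hu, hv⟩ | ⟨hu, hv⟩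
  · exact iff_of_true hu (Set.disjoint_right.1 h.disjoint hv)
  · exact iff_of_false (Set.disjoint_right.1 h.disjoint hu) (not_not.2 hv)

theorem exists_subgraph_edgeSet_eq [DecidableEq V] (s : Finset (Sym2 V))
    (hs : ↑s ⊆ G.edgeSet) :
    ∃ H : G.Subgraph, H.edgeSet = s ∧ H.verts = ↑(s.biUnion Sym2.toFinset) := by
  refine ⟨⟨↑(s.biUnion Sym2.toFinset), fun u v => s(u, v) ∈ s, fun h => hs h,
    fun {u v} h => ?_, ⟨fun u v h => by rwa [Sym2.eq_swap]⟩⟩, ?_, rfl⟩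
  · simp only [coe_biUnion, mem_coe, Set.mem_iUnion, Sym2.mem_toFinset]
    exact ⟨_, h, Sym2.mem_mk_left u v⟩
  · ext e
    induction e using Sym2.ind
    rfl

theorem card_le_mul_card_biUnion_toFinset [DecidableEq V] {d : ℕ}
    (hbound : ∀ H : G.Subgraph, H.verts.Nonempty → H.edgeSet.ncard ≤ d * H.verts.ncard)
    (s : Finset (Sym2 V)) (hs : ↑s ⊆ G.edgeSet) : #s ≤ d * #(s.biUnion Sym2.toFinset) := by
  rcases s.eq_empty_or_nonempty with rfl | ⟨e, he⟩
  · simp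
  obtain ⟨H, hE, hV⟩ := exists_subgraph_edgeSet_eq s hs
  have hne : H.verts.Nonempty :=
    ⟨e.out.1, hV ▸ mem_coe.2 (mem_biUnion.2 ⟨e, he, Sym2.mem_toFinset.2 e.out_fst_mem⟩)⟩
  simpa only [hE, hV, Set.ncard_coe_finset] using hbound H hne

open Classical in
theorem exists_orientation_outdegree_le [Fintype V] {d : ℕ}
    (hbound : ∀ H : G.Subgraph, H.verts.Nonempty → H.edgeSet.ncard ≤ d * H.verts.ncard) :
    ∃ D : V → V → Prop, (∀ u v, D u v → G.Adj u v) ∧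
      (∀ u v, G.Adj u v → D u v ∨ D v u) ∧ ∀ v, #{w | D v w} ≤ d := by
  -- Hall: each edge picks one of `d` slots at one of its ends, no slot picked twice.
  let t : G.edgeSet → Finset (V × Fin d) := fun e => e.1.toFinset ×ˢ univ
  obtain ⟨f, hf_inj, hf_mem⟩ := (all_card_le_biUnion_card_iff_exists_injective t).1 fun s => by
    have hbU :
        s.biUnion t = (s.map (Function.Embedding.subtype _)).biUnion Sym2.toFinset ×ˢ univ := by
      ext; simp [t]
    rw [hbU, card_product, card_univ, Fintype.card_fin, mul_comm,
      ← card_map (Function.Embedding.subtype _)]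
    exact card_le_mul_card_biUnion_toFinset hbound _ (by simp)
  have head_mem : ∀ e, (f e).1 ∈ e.1 := fun e =>
    Sym2.mem_toFinset.1 (mem_product.1 (hf_mem e)).1
  refine ⟨fun u v => ∃ h : G.Adj u v, (f ⟨s(u, v), G.mem_edgeSet.2 h⟩).1 = u,
    fun u v h => h.1, fun u v huv => ?_, fun v => ?_⟩
  · rcases Sym2.mem_iff.1 (head_mem ⟨s(u, v), huv⟩) with h | h
    · exact Or.inl ⟨huv, h⟩
    · have : (⟨s(v, u), huv.symm⟩ : G.edgeSet) = ⟨s(u, v), huv⟩ := Subtype.ext Sym2.eq_swap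
      exact Or.inr ⟨huv.symm, this ▸ h⟩
  · rw [← Fintype.card_subtype]
    refine (Fintype.card_le_of_injective
      (fun w : {w // _} => (f ⟨s(v, w), G.mem_edgeSet.2 w.2.1⟩).2) ?_).trans_eq
      (Fintype.card_fin d)
    rintro ⟨w₁, h₁, hv₁⟩ ⟨w₂, h₂, hv₂⟩ heq
    have := hf_inj (Prod.ext (hv₁.trans hv₂.symm) heq)
    exact Subtype.ext (Sym2.congr_right.1 (Subtype.ext_iff.1 this))

theorem edgeSet_ncard_le_ceil_mul [Finite V] {M : ℝ}
    (hM : ∀ H : G.Subgraph, H.verts.Nonempty → (H.edgeSet.ncard : ℝ) / H.verts.ncard ≤ M)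
    (H : G.Subgraph) (hH : H.verts.Nonempty) : H.edgeSet.ncard ≤ ⌈M⌉₊ * H.verts.ncard := by
  have hpos : (0 : ℝ) < H.verts.ncard := by
    exact_mod_cast (Set.ncard_pos H.verts.toFinite).2 hH
  have := (div_le_iff₀ hpos).1 (hM H hH)
  exact_mod_cast this.trans (mul_le_mul_of_nonneg_right (Nat.le_ceil M) hpos.le)

end SimpleGraph

end

theorem bipartite_choosable_ceil_M_general {V : Type*} [Fintype V] (G : SimpleGraph V)
    (hbip : G.Colorable 2) (M : ℝ)
    (hM : IsGreatest {x : ℝ | ∃ H : G.Subgraph, H.verts.Nonempty ∧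
        x = (H.edgeSet.ncard : ℝ) / (H.verts.ncard : ℝ)} M)
    (k : ℕ) :
    G.Choosable (k * (⌈M⌉₊ + 1)) k := by
  classical
  obtain ⟨A, B, hAB⟩ := SimpleGraph.IsBipartite.exists_isBipartiteWith hbip
  obtain ⟨D, hDG, hGD, hdeg⟩ := G.exists_orientation_outdegree_le
    (G.edgeSet_ncard_le_ceil_mul fun H hH => hM.2 ⟨H, hH, rfl⟩)
  intro S hS
  refine (demandColorable_of_bipartite A (fun u v h => hAB.mem_iff_notMem_of_adj (hDG u v h))
    fun v _ => ?_).of_forall_or hGD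
  calc k + ∑ w with D v w, k = k * (#{w | D v w} + 1) := by rw [sum_const, smul_eq_mul]; ring
    _ ≤ k * (⌈M⌉₊ + 1) := by gcongr; exact hdeg v
    _ = #(S v) := (hS v).symm

theorem bipartite_choosable_ceil_M {V : Type*} [Fintype V] (G : SimpleGraph V)
    (hbip : G.Colorable 2) (M : ℝ)
    (hM : IsGreatest {x : ℝ | ∃ H : G.Subgraph, H.verts.Nonempty ∧
        x = (H.edgeSet.ncard : ℝ) / (H.verts.ncard : ℝ)} M)
    (k : ℕ) (hk : 0 < k) :
    G.Choosable (k * (⌈M⌉₊ + 1)) k :=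
  bipartite_choosable_ceil_M_general G hbip M hM k
end

section
/- If every induced subgraph of a finite simple graph G has a vertex of degree at most d (i.e., G is d-degenerate), then G is (k(d+1):k)-choosable for every positive integer k. -/
/-!
Greedy colouring along a degeneracy order. Remove a vertex `v` with at most `d` neighbours,
choose the remaining graph by induction, and give `v` `k` colours of its list avoiding the
at most `k * d` colours used by its neighbours; the list has `k * (d + 1)` colours, so this
is possible.
-/

open Finset

theorem Finset.exists_subset_card_eq_disjoint {α : Type*} [DecidableEq α] {s t : Finset α}
    {k : ℕ} (h : k + t.card ≤ s.card) : ∃ c ⊆ s, c.card = k ∧ Disjoint c t := by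
  have hk : k ≤ (s \ t).card := by
    have := le_card_sdiff t s
    omega
  obtain ⟨c, hcs, hc⟩ := exists_subset_card_eq hk
  exact ⟨c, hcs.trans sdiff_subset, hc, sdiff_disjoint.mono_left hcs⟩

namespace SimpleGraph

variable {V : Type*} (G : SimpleGraph V)

structure IsChoiceOn (S : V → Finset ℕ) (k : ℕ) (A : Finset V) (C : V → Finset ℕ) : Prop where
  subset : ∀ v ∈ A, C v ⊆ S v
  card_eq : ∀ v ∈ A, (C v).card = k
  disjoint : ∀ u ∈ A, ∀ v ∈ A, G.Adj u v → Disjoint (C u) (C v)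

variable {G}

theorem exists_mem_card_filter_adj_le {d : ℕ} [DecidableRel G.Adj]
    (hdeg : ∀ A : Set V, A.Nonempty → ∃ v ∈ A, {u ∈ A | G.Adj v u}.ncard ≤ d)
    {A : Finset V} (hA : A.Nonempty) : ∃ v ∈ A, (A.filter (G.Adj v)).card ≤ d := by
  obtain ⟨v, hvA, hv⟩ := hdeg A (mod_cast hA)
  exact ⟨v, hvA, by rwa [← Set.ncard_coe_finset, coe_filter]⟩

variable [DecidableEq V] {S C : V → Finset ℕ} {k : ℕ} {A : Finset V} {v : V}

theorem IsChoiceOn.update {Cv : Finset ℕ} (hC : G.IsChoiceOn S k (A.erase v) C)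
    (hsub : Cv ⊆ S v) (hcard : Cv.card = k)
    (hdisj : ∀ u ∈ A, u ≠ v → G.Adj v u → Disjoint Cv (C u)) :
    G.IsChoiceOn S k A (Function.update C v Cv) where
  subset u hu := by
    rcases eq_or_ne u v with rfl | huv
    · simpa using hsub
    · simpa [huv] using hC.subset u (mem_erase.2 ⟨huv, hu⟩)
  card_eq u hu := by
    rcases eq_or_ne u v with rfl | huv
    · simpa using hcard
    · simpa [huv] using hC.card_eq u (mem_erase.2 ⟨huv, hu⟩)
  disjoint u hu w hw hadj := by
    rcases eq_or_ne u v with rfl | huv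
    · have hwu : w ≠ u := (G.ne_of_adj hadj).symm
      simpa [hwu] using hdisj w hw hwu hadj
    rcases eq_or_ne w v with rfl | hwv
    · simpa [huv] using (hdisj u hu huv hadj.symm).symm
    simpa [huv, hwv] using
      hC.disjoint u (mem_erase.2 ⟨huv, hu⟩) w (mem_erase.2 ⟨hwv, hw⟩) hadj

theorem IsChoiceOn.exists_extend [DecidableRel G.Adj] {d : ℕ}
    (hC : G.IsChoiceOn S k (A.erase v) C) (hv : (A.filter (G.Adj v)).card ≤ d)
    (hSv : (S v).card = k * (d + 1)) : ∃ C', G.IsChoiceOn S k A C' := by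
  set N := (A.erase v).filter (G.Adj v)
  have hN : N.card ≤ d := (card_le_card (filter_subset_filter _ (erase_subset v A))).trans hv
  have hused : (N.biUnion C).card ≤ k * d :=
    calc (N.biUnion C).card ≤ N.card * k :=
          card_biUnion_le_card_mul N C k fun u hu => (hC.card_eq u (mem_filter.1 hu).1).le
      _ ≤ k * d := by rw [mul_comm]; exact Nat.mul_le_mul_left k hN
  obtain ⟨Cv, hsub, hcard, hdisj⟩ :=
    exists_subset_card_eq_disjoint (s := S v) (t := N.biUnion C) (k := k) (by rw [hSv]; linarith)
  refine ⟨_, hC.update hsub hcard fun u hu huv hadj => hdisj.mono_right ?_⟩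
  exact subset_biUnion_of_mem C (mem_filter.2 ⟨mem_erase.2 ⟨huv, hu⟩, hadj⟩)

theorem exists_isChoiceOn_of_degenerate {d : ℕ}
    (hdeg : ∀ A : Set V, A.Nonempty → ∃ v ∈ A, {u ∈ A | G.Adj v u}.ncard ≤ d)
    (hS : ∀ v, (S v).card = k * (d + 1)) (A : Finset V) : ∃ C, G.IsChoiceOn S k A C := by
  classical
  induction A using Finset.strongInduction with
  | _ A ih =>
    rcases A.eq_empty_or_nonempty with rfl | hA
    · exact ⟨fun _ => ∅, ⟨by simp, by simp, by simp⟩⟩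
    obtain ⟨v, hvA, hv⟩ := exists_mem_card_filter_adj_le hdeg hA
    obtain ⟨C, hC⟩ := ih (A.erase v) (erase_ssubset hvA)
    exact hC.exists_extend hv (hS v)

end SimpleGraph

theorem degenerate_choosable_general {V : Type*} [Fintype V] (G : SimpleGraph V) (d : ℕ)
    (hdeg : ∀ A : Set V, A.Nonempty → ∃ v ∈ A, {u ∈ A | G.Adj v u}.ncard ≤ d)
    (k : ℕ) :
    G.Choosable (k * (d + 1)) k := by
  classical
  intro S hS
  obtain ⟨C, hC⟩ := G.exists_isChoiceOn_of_degenerate hdeg hS univ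
  exact ⟨C, fun v => hC.subset v (mem_univ v), fun v => hC.card_eq v (mem_univ v),
    fun u v huv => hC.disjoint u (mem_univ u) v (mem_univ v) huv⟩

theorem degenerate_choosable {V : Type*} [Fintype V] (G : SimpleGraph V) (d : ℕ)
    (hdeg : ∀ A : Set V, A.Nonempty → ∃ v ∈ A, {u ∈ A | G.Adj v u}.ncard ≤ d)
    (k : ℕ) (hk : 0 < k) :
    G.Choosable (k * (d + 1)) k :=
  degenerate_choosable_general G d hdeg k
end

section
/- If G is a finite triangulated (chordal) simple graph, i.e., G contains no induced cycle C_n for any n ≥ 4, then ch_k(G) = k·χ(G) = k·ω(G) for every positive integer k, where χ(G) is the chromatic number and ω(G) is the clique number of G. -/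
namespace SimpleGraph

variable {V : Type*} {G : SimpleGraph V}

lemma cycleGraph_adj_iff_val {n : ℕ} {i j : Fin (n + 2)} :
    (cycleGraph (n + 2)).Adj i j ↔
      (i : ℕ) = j + 1 ∨ (j : ℕ) = i + 1 ∨ (i : ℕ) + (n + 1) = j ∨ (j : ℕ) + (n + 1) = i := by
  have := i.isLt
  have := j.isLt
  rcases lt_trichotomy i j with h | rfl | h
  · rw [cycleGraph_adj', Fin.coe_sub_iff_lt.mpr h, Fin.coe_sub_iff_le.mpr h.le]
    rw [Fin.lt_def] at h
    omega
  · simp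
  · rw [cycleGraph_adj', Fin.coe_sub_iff_lt.mpr h, Fin.coe_sub_iff_le.mpr h.le]
    rw [Fin.lt_def] at h
    omega

lemma nonempty_cycleGraph_embedding {g : ℕ → V} {n : ℕ} {x : V}
    (hg : ∀ i ≤ n, ∀ j ≤ n, G.Adj (g i) (g j) ↔ i = j + 1 ∨ j = i + 1) (hne : g 0 ≠ g n)
    (hx : ∀ i ≤ n, G.Adj x (g i) ↔ i = 0 ∨ i = n) (hxg : ∀ i ≤ n, x ≠ g i) :
    Nonempty (cycleGraph (n + 2) ↪g G) := by
  have hinj : ∀ i ≤ n, ∀ j ≤ n, i < j → g i ≠ g j := by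
    intro i hi j hj hij heq
    rcases Nat.lt_or_ge j n with hjn | hjn
    · have := (hg j hj (j + 1) hjn).2 (by omega)
      rw [← heq, hg i hi (j + 1) hjn] at this
      omega
    · rcases Nat.eq_zero_or_pos i with rfl | hi0
      · exact hne (by rw [heq, show j = n by omega])
      · have := (hg (i - 1) (by omega) i hi).2 (by omega)
        rw [heq, hg (i - 1) (by omega) j hj] at this
        omega
  let φ : Fin (n + 2) → V := fun i => if (i : ℕ) ≤ n then g i else x
  have hadj : ∀ i j : Fin (n + 2), G.Adj (φ i) (φ j) ↔ (cycleGraph (n + 2)).Adj i j := by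
    intro i j
    have := i.isLt
    have := j.isLt
    rw [cycleGraph_adj_iff_val]
    simp only [φ]
    split_ifs with hi hj hj
    · rw [hg i hi j hj]; omega
    · rw [G.adj_comm, hx i hi]; omega
    · rw [hx j hj]; omega
    · simp only [G.irrefl, false_iff]; omega
  refine ⟨⟨⟨φ, fun i j hij => ?_⟩, hadj _ _⟩⟩
  have := i.isLt
  have := j.isLt
  simp only [φ] at hij
  rw [Fin.ext_iff]
  split_ifs at hij with hi hj hj
  · by_contra h
    rcases Nat.lt_or_gt_of_ne h with h | h
    · exact hinj i hi j hj h hij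
    · exact hinj j hj i hi h hij.symm
  · exact absurd hij.symm (hxg i hi)
  · exact absurd hij (hxg j hj)
  · omega

/-- A walk `f 0, …, f m` from `u` to `w` with inner vertices in `A`, encoded as a sequence
rather than a `G.Walk` so that shortcutting it is index arithmetic. -/
structure IsWalkSeq (G : SimpleGraph V) (A : Set V) (u w : V) (f : ℕ → V) (m : ℕ) : Prop where
  first : f 0 = u
  last : f m = w
  adj : ∀ i < m, G.Adj (f i) (f (i + 1))
  inner_mem : ∀ i, 0 < i → i < m → f i ∈ A

namespace IsWalkSeq

variable {A : Set V} {u w : V} {f : ℕ → V} {m : ℕ}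

lemma nil (G : SimpleGraph V) (A : Set V) (u : V) : G.IsWalkSeq A u u (fun _ => u) 0 where
  first := rfl
  last := rfl
  adj _ h := absurd h (Nat.not_lt_zero _)
  inner_mem _ _ h := absurd h (Nat.not_lt_zero _)

lemma snoc (hf : G.IsWalkSeq A u w f m) (hw : 0 < m → w ∈ A) {w' : V} (h : G.Adj w w') :
    G.IsWalkSeq A u w' (fun i => if i ≤ m then f i else w') (m + 1) where
  first := by simp [hf.first]
  last := by simp
  adj i hi := by
    rcases Nat.lt_or_ge i m with him | him
    · simpa [him.le, Nat.succ_le_of_lt him] using hf.adj i him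
    · simpa [show i = m by omega, hf.last] using h
  inner_mem i hi0 hi := by
    rcases Nat.lt_or_ge i m with him | him
    · simpa [him.le] using hf.inner_mem i hi0 him
    · simpa [show i = m by omega, hf.last] using hw (by omega)

lemma shortcut (hf : G.IsWalkSeq A u w f m) {i j : ℕ} (hij : i < j) (hjm : j ≤ m)
    (hadj : G.Adj (f i) (f j)) :
    G.IsWalkSeq A u w (fun k => if k ≤ i then f k else f (k + (j - i - 1)))
      (m - (j - i - 1)) where
  first := by simp [hf.first]
  last := by
    rw [if_neg (by omega), show m - (j - i - 1) + (j - i - 1) = m by omega, hf.last]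
  adj k hk := by
    rcases lt_trichotomy k i with hki | rfl | hki
    · simpa [hki.le, Nat.succ_le_of_lt hki] using hf.adj k (by omega)
    · simpa [show k + 1 + (j - k - 1) = j by omega] using hadj
    · simpa [show ¬k ≤ i by omega, show ¬k + 1 ≤ i by omega,
        show k + 1 + (j - i - 1) = k + (j - i - 1) + 1 by omega]
        using hf.adj (k + (j - i - 1)) (by omega)
  inner_mem k hk0 hkm := by
    split_ifs
    · exact hf.inner_mem k hk0 (by omega)
    · exact hf.inner_mem _ (by omega) (by omega)

lemma exists_chordless (hf : G.IsWalkSeq A u w f m) :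
    ∃ g n, G.IsWalkSeq A u w g n ∧ ∀ i j, i + 1 < j → j ≤ n → ¬G.Adj (g i) (g j) := by
  classical
  have hex : ∃ n g, G.IsWalkSeq A u w g n := ⟨m, f, hf⟩
  obtain ⟨g, hg⟩ := Nat.find_spec hex
  refine ⟨g, _, hg, fun i j hij hjn hadj => ?_⟩
  have := Nat.find_min' hex ⟨_, hg.shortcut (by omega) hjn hadj⟩
  omega

end IsWalkSeq

/-- The component of `y` in `G[t]`; it is `{y}` if `y ∉ t`. -/
def componentIn (G : SimpleGraph V) (t : Set V) (y : V) : Set V :=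
  {z | ((⊤ : G.Subgraph).induce t).spanningCoe.Reachable y z}

section componentIn

variable {t : Set V} {y z z' : V}

lemma self_mem_componentIn : y ∈ G.componentIn t y := Reachable.refl y

lemma componentIn_subset (hy : y ∈ t) : G.componentIn t y ⊆ t := fun z hz => by
  induction (reachable_iff_reflTransGen _ _).1 hz with
  | refl => exact hy
  | tail _ h _ => exact h.2.1

lemma mem_componentIn_of_adj (hy : y ∈ t) (hz : z ∈ G.componentIn t y) (hz' : z' ∈ t)
    (h : G.Adj z z') : z' ∈ G.componentIn t y :=
  Reachable.trans hz (Adj.reachable ⟨componentIn_subset hy hz, hz', h⟩)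

lemma componentIn_eq (hz : z ∈ G.componentIn t y) : G.componentIn t z = G.componentIn t y :=
  Set.ext fun _ => ⟨Reachable.trans hz, Reachable.trans (Reachable.symm hz)⟩

lemma exists_isWalkSeq_of_mem_componentIn {u c c' w : V} (huc : G.Adj u c)
    (hc' : c' ∈ G.componentIn t c) (hc'w : G.Adj c' w) :
    ∃ f m, G.IsWalkSeq (G.componentIn t c) u w f m := by
  induction (reachable_iff_reflTransGen _ _).1 hc' generalizing w with
  | refl =>
    exact ⟨_, _, ((IsWalkSeq.nil G _ u).snoc (by simp) huc).snoc
      (fun _ => self_mem_componentIn) hc'w⟩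
  | tail hcb hbc' ih =>
    obtain ⟨f, m, hf⟩ := ih ((reachable_iff_reflTransGen _ _).2 hcb) hbc'.2.2
    exact ⟨_, _, hf.snoc (fun _ => (reachable_iff_reflTransGen _ _).2 (hcb.tail hbc')) hc'w⟩

end componentIn

def IsChordal (G : SimpleGraph V) : Prop :=
  ∀ n : ℕ, 4 ≤ n → IsEmpty (cycleGraph n ↪g G)

/-- If `u` and `w` were not adjacent, a shortest such walk would close up through `x` into an
induced cycle. -/
theorem IsChordal.adj_of_isWalkSeq (hG : G.IsChordal) {A : Set V} {x u w : V} {f : ℕ → V}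
    {m : ℕ} (hf : G.IsWalkSeq A u w f m) (hA : ∀ a ∈ A, a ≠ x ∧ ¬G.Adj x a)
    (hxu : G.Adj x u) (hxw : G.Adj x w) (huw : u ≠ w) : G.Adj u w := by
  by_contra hnadj
  obtain ⟨g, n, hg, hchord⟩ := hf.exists_chordless
  have hn : 2 ≤ n := by
    by_contra! hn
    interval_cases n
    · exact huw (hg.first.symm.trans hg.last)
    · exact hnadj (hg.first ▸ hg.last ▸ hg.adj 0 one_pos)
  have hlt : ∀ i j, i < j → j ≤ n → (G.Adj (g i) (g j) ↔ j = i + 1) := by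
    refine fun i j hij hj => ⟨fun h => ?_, fun h => h ▸ hg.adj i (by omega)⟩
    by_contra
    exact hchord i j (by omega) hj h
  have hpath : ∀ i ≤ n, ∀ j ≤ n, G.Adj (g i) (g j) ↔ i = j + 1 ∨ j = i + 1 := by
    intro i _ j hj
    rcases lt_trichotomy i j with h | rfl | h
    · rw [hlt i j h hj]; omega
    · simp
    · rw [G.adj_comm, hlt j i h (by omega)]; omega
  have hx : ∀ i ≤ n, G.Adj x (g i) ↔ i = 0 ∨ i = n := by
    intro i hi
    rcases Nat.eq_zero_or_pos i with rfl | hi0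
    · simpa [hg.first] using hxu
    rcases hi.lt_or_eq with hin | rfl
    · simpa [hi0.ne', hin.ne] using (hA _ (hg.inner_mem i hi0 hin)).2
    · simpa [hg.last] using hxw
  have hxg : ∀ i ≤ n, x ≠ g i := by
    intro i hi
    rcases Nat.eq_zero_or_pos i with rfl | hi0
    · exact hg.first ▸ hxu.ne
    rcases hi.lt_or_eq with hin | rfl
    · exact (hA _ (hg.inner_mem i hi0 hin)).1.symm
    · exact hg.last ▸ hxw.ne
  exact (hG (n + 2) (by omega)).false
    (nonempty_cycleGraph_embedding hpath (by rwa [hg.first, hg.last]) hx hxg).some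

theorem IsChordal.adj_of_adj_componentIn (hG : G.IsChordal) {t : Set V} {x u w y c c' : V}
    (ht : ∀ z ∈ t, z ≠ x ∧ ¬G.Adj x z) (hy : y ∈ t)
    (hc : c ∈ G.componentIn t y) (hc' : c' ∈ G.componentIn t y) (huc : G.Adj u c)
    (hwc' : G.Adj w c') (hxu : G.Adj x u) (hxw : G.Adj x w) (huw : u ≠ w) : G.Adj u w := by
  rw [← componentIn_eq hc] at hc'
  obtain ⟨f, m, hf⟩ := exists_isWalkSeq_of_mem_componentIn huc hc' hwc'.symm
  rw [componentIn_eq hc] at hf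
  exact hG.adj_of_isWalkSeq hf (fun a ha => ht a (componentIn_subset hy ha)) hxu hxw huw

def IsSimplicialIn (G : SimpleGraph V) (s : Set V) (v : V) : Prop :=
  G.IsClique (s ∩ G.neighborSet v)

lemma exists_isSimplicialIn_mem {s : Finset V}
    (hs : ∀ x ∈ s, ∀ y ∈ s, x ≠ y → ¬G.Adj x y →
      ∃ v ∈ s, v ≠ x ∧ ¬G.Adj x v ∧ G.IsSimplicialIn s v)
    {C : Set V} {y : V} (hyC : y ∈ C) (hsC : G.IsClique (↑s \ C)) :
    ∃ v ∈ C, G.IsSimplicialIn s v := by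
  by_cases hcl : G.IsClique (s : Set V)
  · exact ⟨y, hyC, hcl.subset Set.inter_subset_left⟩
  obtain ⟨p, hp, q, hq, hpq, hnpq⟩ : ∃ p ∈ s, ∃ q ∈ s, p ≠ q ∧ ¬G.Adj p q := by
    simpa [IsClique, Set.Pairwise] using hcl
  obtain ⟨v₁, hv₁, hv₁p, hpv₁, hs₁⟩ := hs p hp q hq hpq hnpq
  obtain ⟨v₂, hv₂, hv₂v₁, hv₁v₂, hs₂⟩ := hs v₁ hv₁ p hp hv₁p (fun h => hpv₁ h.symm)
  by_cases h₁ : v₁ ∈ C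
  · exact ⟨v₁, h₁, hs₁⟩
  by_cases h₂ : v₂ ∈ C
  · exact ⟨v₂, h₂, hs₂⟩
  exact absurd (hsC ⟨hv₁, h₁⟩ ⟨hv₂, h₂⟩ hv₂v₁.symm) hv₁v₂

theorem IsChordal.exists_isSimplicialIn_not_adj (hG : G.IsChordal) (s : Finset V) :
    ∀ x ∈ s, ∀ y ∈ s, x ≠ y → ¬G.Adj x y →
      ∃ v ∈ s, v ≠ x ∧ ¬G.Adj x v ∧ G.IsSimplicialIn s v := by
  classical
  induction s using Finset.strongInduction with
  | H s ih =>
  intro x hx y hy hxy hnxy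
  set t : Set V := {z | z ∈ s ∧ z ≠ x ∧ ¬G.Adj x z}
  set C := G.componentIn t y
  have hyt : y ∈ t := ⟨hy, hxy.symm, hnxy⟩
  have hCt : C ⊆ t := componentIn_subset hyt
  set s' := s.filter (fun z => z ∈ C ∨ ∃ c ∈ C, G.Adj z c)
  have hxs' : x ∉ s' := by
    simp only [s', Finset.mem_filter, not_and, not_or, not_exists]
    exact fun _ => ⟨fun h => (hCt h).2.1 rfl, fun c hc h => (hCt hc).2.2 h⟩
  have hsep : ∀ z ∈ s', z ∉ C → G.Adj x z ∧ ∃ c ∈ C, G.Adj z c := by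
    intro z hz hzC
    obtain ⟨hzs, hzc⟩ := Finset.mem_filter.1 hz
    obtain ⟨c, hc, hzc⟩ := hzc.resolve_left hzC
    refine ⟨by_contra fun h => hzC ?_, c, hc, hzc⟩
    exact mem_componentIn_of_adj hyt hc ⟨hzs, fun h => hxs' (h ▸ hz), h⟩ hzc.symm
  have hS : G.IsClique (↑s' \ C) := by
    rintro u ⟨hu, huC⟩ w ⟨hw, hwC⟩ huw
    obtain ⟨hxu, c, hc, huc⟩ := hsep u hu huC
    obtain ⟨hxw, c', hc', hwc'⟩ := hsep w hw hwC
    exact hG.adj_of_adj_componentIn (fun z hz => hz.2) hyt hc hc' huc hwc' hxu hxw huw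
  obtain ⟨v, hvC, hv⟩ := exists_isSimplicialIn_mem
    (ih s' (Finset.ssubset_iff_of_subset (Finset.filter_subset _ _) |>.2 ⟨x, hx, hxs'⟩))
    self_mem_componentIn hS
  refine ⟨v, (hCt hvC).1, (hCt hvC).2.1, (hCt hvC).2.2, hv.subset ?_⟩
  rintro z ⟨hzs, hvz⟩
  exact ⟨Finset.mem_filter.2 ⟨hzs, Or.inr ⟨v, hvC, hvz.symm⟩⟩, hvz⟩

theorem IsChordal.exists_isSimplicialIn (hG : G.IsChordal) {s : Finset V} (hs : s.Nonempty) :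
    ∃ v ∈ s, G.IsSimplicialIn s v := by
  obtain ⟨y, hy⟩ := hs
  exact exists_isSimplicialIn_mem (hG.exists_isSimplicialIn_not_adj s) hy (by simp)

lemma IsSimplicialIn.card_neighbors_add_one_le_cliqueNum [Finite V] [DecidableEq V]
    {s : Finset V} {v : V} [DecidablePred (G.Adj v)] (h : G.IsSimplicialIn s v) :
    (s.filter (G.Adj v)).card + 1 ≤ G.cliqueNum := by
  have hcl : G.IsClique (insert v (s.filter (G.Adj v)) : Finset V) := by
    rw [Finset.coe_insert]
    refine (h.subset fun z hz => ?_).insert fun z hz _ => (Finset.mem_filter.1 hz).2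
    rw [Finset.mem_coe, Finset.mem_filter] at hz
    exact hz
  simpa using hcl.card_le_cliqueNum

open Finset in
lemma exists_disjoint_choice_of_forall_exists_isSimplicialIn [Finite V]
    (h : ∀ s : Finset V, s.Nonempty → ∃ v ∈ s, G.IsSimplicialIn s v) {k : ℕ}
    {S : V → Finset ℕ} (hS : ∀ v, k * G.cliqueNum ≤ #(S v)) (s : Finset V) :
    ∃ C : V → Finset ℕ, (∀ v ∈ s, C v ⊆ S v ∧ #(C v) = k) ∧
      ∀ u ∈ s, ∀ w ∈ s, G.Adj u w → Disjoint (C u) (C w) := by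
  classical
  induction s using Finset.strongInduction with
  | H s ih =>
  rcases s.eq_empty_or_nonempty with rfl | hne
  · exact ⟨fun _ => ∅, by simp, by simp⟩
  obtain ⟨v, hv, hsimp⟩ := h s hne
  obtain ⟨C, hCS, hCadj⟩ := ih (s.erase v) (erase_ssubset hv)
  set N := s.filter (G.Adj v)
  have hN : ∀ w ∈ N, w ∈ s.erase v := fun w hw =>
    mem_erase.2 ⟨(mem_filter.1 hw).2.ne', (mem_filter.1 hw).1⟩
  have hfree : k ≤ #(S v \ N.biUnion C) := by
    have h₁ := le_card_sdiff (N.biUnion C) (S v)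
    have h₂ := card_biUnion_le_card_mul N C k fun w hw => (hCS w (hN w hw)).2.le
    have h₃ : k * (#N + 1) ≤ k * G.cliqueNum :=
      Nat.mul_le_mul_left k hsimp.card_neighbors_add_one_le_cliqueNum
    have h₄ := hS v
    rw [mul_add, mul_one, mul_comm k] at h₃
    omega
  obtain ⟨c, hc, hck⟩ := exists_subset_card_eq hfree
  have hcN : ∀ w ∈ s.erase v, G.Adj v w → Disjoint c (C w) := fun w hw hvw =>
    disjoint_of_subset_left hc (disjoint_sdiff_self_left.mono_right
      (subset_biUnion_of_mem C (mem_filter.2 ⟨mem_of_mem_erase hw, hvw⟩)))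
  refine ⟨Function.update C v c, fun w hw => ?_, fun u hu w hw huw => ?_⟩
  · rcases eq_or_ne w v with rfl | hwv
    · simpa [hck] using hc.trans sdiff_subset
    · simpa [hwv] using hCS w (mem_erase.2 ⟨hwv, hw⟩)
  rcases eq_or_ne u v with rfl | huv
  · simpa [huw.ne'] using hcN w (mem_erase.2 ⟨huw.ne', hw⟩) huw
  rcases eq_or_ne w v with rfl | hwv
  · simpa [huv] using (hcN u (mem_erase.2 ⟨huv, hu⟩) huw.symm).symm
  simpa [huv, hwv] using hCadj u (mem_erase.2 ⟨huv, hu⟩) w (mem_erase.2 ⟨hwv, hw⟩) huw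

theorem choosable_of_forall_exists_isSimplicialIn [Fintype V]
    (h : ∀ s : Finset V, s.Nonempty → ∃ v ∈ s, G.IsSimplicialIn s v) (k : ℕ) :
    G.Choosable (k * G.cliqueNum) k := by
  intro S hS
  obtain ⟨C, hCS, hCadj⟩ :=
    exists_disjoint_choice_of_forall_exists_isSimplicialIn h (fun v => (hS v).ge) Finset.univ
  exact ⟨C, fun v => (hCS v (Finset.mem_univ v)).1, fun v => (hCS v (Finset.mem_univ v)).2,
    fun u w => hCadj u (Finset.mem_univ u) w (Finset.mem_univ w)⟩

namespace Choosable

variable {n k : ℕ}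

theorem mul_card_le_of_isClique (h : G.Choosable n k) {T : Finset V}
    (hT : G.IsClique (T : Set V)) : k * T.card ≤ n := by
  classical
  obtain ⟨C, hCS, hCk, hCadj⟩ := h (fun _ => Finset.range n) (fun _ => Finset.card_range n)
  calc k * T.card = (T.biUnion C).card := by
        rw [Finset.card_biUnion fun u hu w hw huw => hCadj u w (hT hu hw huw)]
        simp [hCk, mul_comm]
    _ ≤ (Finset.range n).card := Finset.card_le_card (Finset.biUnion_subset.2 fun v _ => hCS v)
    _ = n := Finset.card_range n

theorem colorable (h : G.Choosable n 1) : G.Colorable n := by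
  obtain ⟨C, hCS, hC1, hCadj⟩ := h (fun _ => Finset.range n) (fun _ => Finset.card_range n)
  choose c hc using fun v => Finset.card_eq_one.1 (hC1 v)
  refine (colorable_iff_exists_bdd_nat_coloring n).2
    ⟨Coloring.mk c fun {u w} huw hcuw => ?_, fun v => ?_⟩
  · simpa [hc u, hc w, hcuw] using hCadj u w huw
  · simpa using hCS v (by simp [hc v, Coloring.mk])

end Choosable

end SimpleGraph

theorem chordal_kth_choice_number_general {V : Type*} [Fintype V] (G : SimpleGraph V)
    (hchordal : ∀ n : ℕ, 4 ≤ n → IsEmpty (SimpleGraph.cycleGraph n ↪g G))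
    (k : ℕ) :
    G.chooseNum k = k * G.chromaticNumber.toNat ∧
    k * G.chromaticNumber.toNat = k * G.cliqueNum := by
  have hsimp : ∀ s : Finset V, s.Nonempty → ∃ v ∈ s, G.IsSimplicialIn s v :=
    fun _ => SimpleGraph.IsChordal.exists_isSimplicialIn hchordal
  have hcol : G.Colorable G.cliqueNum := by
    simpa using (G.choosable_of_forall_exists_isSimplicialIn hsimp 1).colorable
  have hχ : G.chromaticNumber = G.cliqueNum :=
    le_antisymm hcol.chromaticNumber_le G.cliqueNum_le_chromaticNumber
  have hup := G.choosable_of_forall_exists_isSimplicialIn hsimp k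
  obtain ⟨T, hT⟩ := G.exists_isNClique_cliqueNum
  have hchoose : G.chooseNum k = k * G.cliqueNum := le_antisymm (Nat.sInf_le hup)
    (le_csInf ⟨_, hup⟩ fun n hn => hT.card_eq ▸ hn.mul_card_le_of_isClique hT.isClique)
  simp [hχ, hchoose]

theorem chordal_kth_choice_number {V : Type*} [Fintype V] (G : SimpleGraph V)
    (hchordal : ∀ n : ℕ, 4 ≤ n → IsEmpty (SimpleGraph.cycleGraph n ↪g G))
    (k : ℕ) (hk : 0 < k) :
    G.chooseNum k = k * G.chromaticNumber.toNat ∧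
    k * G.chromaticNumber.toNat = k * G.cliqueNum :=
  chordal_kth_choice_number_general G hchordal k
end

section
/- If a finite simple graph G contains no cycle C_n (as a subgraph) for every n ≥ 4, then the line graph L(G) satisfies ch(L(G)) = χ(L(G)), i.e., the choice number of L(G) equals its chromatic number. -/
/-! Since every cycle of `G` is a triangle, the start `u` of a longest path `u v c …` has all its
neighbours among `v, c` (they lie on the path, and a chord to a later vertex closes a long
cycle). If moreover `u ~ c`, the rerouted path `v u c …` is again longest, so the neighbours of
`v` lie among `u, c` too. Either way all edges meeting `uv` pass through one vertex. Applied to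
the subgraph spanned by any set of edges, this says that every induced subgraph of `L(G)` has a
simplicial vertex. Colouring greedily in the reverse of such an elimination order, each vertex
together with its already coloured neighbours forms a clique, so lists of size `ω(L(G))` suffice,
and `L(G)` is `χ(L(G))`-choosable. -/

namespace SimpleGraph

section Choosability

variable {W : Type*} {H : SimpleGraph W} {n : ℕ}

theorem choosable_one_iff : H.Choosable n 1 ↔ ∀ S : W → Finset ℕ, (∀ v, (S v).card = n) →
    ∃ c : W → ℕ, (∀ v, c v ∈ S v) ∧ ∀ u v, H.Adj u v → c u ≠ c v := by
  refine forall₂_congr fun S _ ↦ ⟨?_, ?_⟩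
  · rintro ⟨C, hCS, hC, hdisj⟩
    choose c hc using fun v ↦ Finset.card_eq_one.1 (hC v)
    refine ⟨c, fun v ↦ hCS v (by simp [hc]), fun u v huv ↦ ?_⟩
    simpa [hc] using hdisj u v huv
  · rintro ⟨c, hcS, hc⟩
    exact ⟨fun v ↦ {c v}, by simpa using hcS, fun _ ↦ rfl, by simpa using hc⟩

theorem Choosable.colorable_s12 (h : H.Choosable n 1) : H.Colorable n := by
  obtain ⟨c, hcS, hc⟩ := choosable_one_iff.1 h (fun _ ↦ Finset.range n) fun _ ↦ by simp
  exact ⟨Coloring.mk (fun v ↦ ⟨c v, by simpa using hcS v⟩)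
    fun huv h ↦ hc _ _ huv (by simpa using h)⟩

theorem CliqueFree.card_lt_of_isClique_of_forall_adj (hH : H.CliqueFree (n + 1)) {s : Finset W}
    {v : W} (hs : H.IsClique (s : Set W)) (hv : ∀ u ∈ s, H.Adj v u) : s.card < n := by
  classical
  by_contra! hns
  obtain ⟨t, hts, ht⟩ := Finset.exists_subset_card_eq hns
  have hvt : v ∉ t := fun h ↦ (hv v (hts h)).ne rfl
  refine hH (insert v t) ⟨?_, by rw [Finset.card_insert_of_notMem hvt, ht]⟩
  rw [Finset.coe_insert]
  exact (hs.subset hts).insert fun u hu _ ↦ hv u (hts hu)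

theorem choosable_of_forall_exists_isClique_neighborSet [Finite W] (hH : H.CliqueFree (n + 1))
    (hsimp : ∀ A : Finset W, A.Nonempty → ∃ v ∈ A, H.IsClique (↑A ∩ H.neighborSet v)) :
    H.Choosable n 1 := by
  classical
  refine choosable_one_iff.2 fun S hS ↦ ?_
  suffices hA : ∀ A : Finset W, ∃ c : W → ℕ, (∀ v ∈ A, c v ∈ S v) ∧
      ∀ u ∈ A, ∀ v ∈ A, H.Adj u v → c u ≠ c v by
    have := Fintype.ofFinite W
    simpa using hA Finset.univ
  intro A
  induction A using Finset.strongInduction with | _ A ih => ?_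
  obtain rfl | hA := A.eq_empty_or_nonempty
  · simp
  obtain ⟨v, hvA, hv⟩ := hsimp A hA
  obtain ⟨c, hcS, hc⟩ := ih (A.erase v) (Finset.erase_ssubset hvA)
  set N := (A.erase v).filter (H.Adj v)
  have hNA : ∀ u ∈ N, u ∈ A ∧ H.Adj v u := fun u hu ↦
    (Finset.mem_filter.1 hu).imp_left Finset.mem_of_mem_erase
  have hN : N.card < n := hH.card_lt_of_isClique_of_forall_adj
    (hv.subset fun u hu ↦ hNA u hu) fun u hu ↦ (hNA u hu).2
  obtain ⟨a, haS, haN⟩ := Finset.exists_mem_notMem_of_card_lt_card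
    ((Finset.card_image_le (f := c)).trans_lt (hN.trans_eq (hS v).symm))
  have ha : ∀ u ∈ A, H.Adj v u → a ≠ c u := fun u hu hvu hau ↦
    haN (Finset.mem_image.2 ⟨u, by simp [N, hu, hvu, hvu.ne.symm], hau.symm⟩)
  refine ⟨Function.update c v a, fun u hu ↦ ?_, fun u hu w hw huw ↦ ?_⟩
  · rcases eq_or_ne u v with rfl | huv
    · simpa using haS
    · simpa [huv] using hcS u (Finset.mem_erase.2 ⟨huv, hu⟩)
  · rcases eq_or_ne u v with rfl | huv
    · simpa [huw.ne.symm] using ha w hw huw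
    rcases eq_or_ne w v with rfl | hwv
    · simpa [huv] using (ha u hu huw.symm).symm
    simpa [huv, hwv] using
      hc u (Finset.mem_erase.2 ⟨huv, hu⟩) w (Finset.mem_erase.2 ⟨hwv, hw⟩) huw

theorem chooseNum_one_eq_chromaticNumber_of_forall_exists_isClique_neighborSet [Finite W]
    (hsimp : ∀ A : Finset W, A.Nonempty → ∃ v ∈ A, H.IsClique (↑A ∩ H.neighborSet v)) :
    (H.chooseNum 1 : ℕ∞) = H.chromaticNumber := by
  set k := H.chromaticNumber.toNat
  have hk : H.Colorable k := H.colorable_chromaticNumber_of_fintype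
  have hchoose : H.Choosable k 1 :=
    choosable_of_forall_exists_isClique_neighborSet (hk.cliqueFree k.lt_succ_self) hsimp
  have hkχ : (k : ℕ∞) = H.chromaticNumber :=
    ENat.natCast_toNat (chromaticNumber_ne_top_iff_exists.2 ⟨k, hk⟩)
  have hle : ∀ m, H.Choosable m 1 → k ≤ m := fun m hm ↦ by
    exact_mod_cast hkχ.trans_le hm.colorable_s12.chromaticNumber_le
  rw [← hkχ]
  exact congrArg _ (le_antisymm (Nat.sInf_le hchoose) (le_csInf ⟨k, hchoose⟩ hle))

end Choosability

section NoLongCycles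

variable {V : Type*} {G : SimpleGraph V}

namespace Walk

def IsLongestPath {u v : V} (p : G.Walk u v) : Prop :=
  p.IsPath ∧ ∀ a b (q : G.Walk a b), q.IsPath → q.length ≤ p.length

theorem exists_isLongestPath [Finite V] [Nonempty V] (G : SimpleGraph V) :
    ∃ (u v : V) (p : G.Walk u v), p.IsLongestPath := by
  classical
  have := Fintype.ofFinite V
  have : Nonempty (Σ x : V × V, G.Path x.1 x.2) := ⟨⟨(Classical.arbitrary V, _), Path.nil⟩⟩
  obtain ⟨⟨⟨u, v⟩, p, hp⟩, hmax⟩ :=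
    Finite.exists_max fun q : Σ x : V × V, G.Path x.1 x.2 ↦ q.2.1.length
  exact ⟨u, v, p, hp, fun a b q hq ↦ hmax ⟨(a, b), q, hq⟩⟩

theorem IsLongestPath.mem_support_of_adj {u v x : V} {p : G.Walk u v} (hp : p.IsLongestPath)
    (h : G.Adj u x) : x ∈ p.support := by
  by_contra hx
  simpa using hp.2 x v (cons h.symm p) (hp.1.cons hx)

theorem IsPath.eq_getVert_one_or_two_of_adj
    (hG : ∀ (v : V) (p : G.Walk v v), p.IsCycle → p.length < 4)
    {u v x : V} {p : G.Walk u v} (hp : p.IsPath) (hx : x ∈ p.support) (h : G.Adj u x) :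
    x = p.getVert 1 ∨ x = p.getVert 2 := by
  classical
  set q := p.takeUntil x hx
  have hq : q.IsPath := hp.takeUntil hx
  have hpos : q.length ≠ 0 := fun h0 ↦ h.ne (eq_of_length_eq_zero h0)
  have hle : q.length ≤ 2 := by
    by_contra! h3
    have hedge : s(x, u) ∉ q.edges := fun he ↦ by
      have := hq.length_eq_one_of_mem_edges (Sym2.eq_swap ▸ he)
      omega
    have := hG x _ ((cons_isCycle_iff q h.symm).2 ⟨hq, hedge⟩)
    rw [length_cons] at this
    omega
  have hxq := p.getVert_length_takeUntil hx
  obtain h1 | h2 : q.length = 1 ∨ q.length = 2 := by omega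
  · exact Or.inl (by rw [← h1, hxq])
  · exact Or.inr (by rw [← h2, hxq])

theorem IsLongestPath.eq_getVert_one_or_two_of_adj
    (hG : ∀ (v : V) (p : G.Walk v v), p.IsCycle → p.length < 4)
    {u v x : V} {p : G.Walk u v} (hp : p.IsLongestPath) (h : G.Adj u x) :
    x = p.getVert 1 ∨ x = p.getVert 2 :=
  hp.1.eq_getVert_one_or_two_of_adj hG (hp.mem_support_of_adj h) h

theorem IsLongestPath.cons_cons_swap {v₀ v₁ v₂ w : V} {h₀₁ : G.Adj v₀ v₁} {h₁₂ : G.Adj v₁ v₂}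
    {p : G.Walk v₂ w} (hp : (cons h₀₁ (cons h₁₂ p)).IsLongestPath) (h₀₂ : G.Adj v₀ v₂) :
    (cons h₀₁.symm (cons h₀₂ p)).IsLongestPath := by
  refine ⟨isPath_def _ |>.2 ?_, by simpa using hp.2⟩
  simpa [support_cons] using (List.Perm.swap v₁ v₀ p.support).nodup_iff.1 ((isPath_def _).1 hp.1)

end Walk

open Walk

theorem exists_adj_forall_adj_eq_or_eq [Finite V]
    (hG : ∀ (v : V) (p : G.Walk v v), p.IsCycle → p.length < 4) (hE : G.edgeSet.Nonempty) :
    ∃ u v c : V, G.Adj u v ∧ (∀ y, G.Adj u y → y = v ∨ y = c) ∧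
      (c = v ∨ ∀ y, G.Adj v y → y = u ∨ y = c) := by
  obtain ⟨⟨a, b⟩, hab⟩ := hE
  rw [mem_edgeSet] at hab
  have : Nonempty V := ⟨a⟩
  obtain ⟨u, w, p, hp⟩ := exists_isLongestPath G
  cases p with
  | nil => exact absurd (hp.2 a b _ hab.isPath_toWalk) (by simp)
  | @cons _ v _ huv p =>
    have hu : ∀ y, G.Adj u y → y = v ∨ y = p.getVert 1 := fun y hy ↦ by
      simpa using hp.eq_getVert_one_or_two_of_adj hG hy
    by_cases hc : G.Adj u (p.getVert 1)
    · refine ⟨u, v, p.getVert 1, huv, hu, ?_⟩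
      cases p with
      | nil => exact Or.inl rfl
      | cons hvc p =>
        refine Or.inr fun y hy ↦ ?_
        have := (hp.cons_cons_swap (by simpa using hc)).eq_getVert_one_or_two_of_adj hG hy
        simpa only [getVert_cons_succ, getVert_zero] using this
    · refine ⟨u, v, v, huv, fun y hy ↦ ?_, Or.inl rfl⟩
      obtain rfl | rfl := hu y hy
      · exact Or.inl rfl
      · exact absurd hy hc

theorem exists_mem_edgeSet_forall_meeting_mem [Finite V]
    (hG : ∀ (v : V) (p : G.Walk v v), p.IsCycle → p.length < 4) (hE : G.edgeSet.Nonempty) :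
    ∃ e ∈ G.edgeSet, ∃ c : V, ∀ f ∈ G.edgeSet, f ≠ e → (∃ x, x ∈ e ∧ x ∈ f) → c ∈ f := by
  obtain ⟨u, v, c, huv, hu, hv⟩ := exists_adj_forall_adj_eq_or_eq hG hE
  have key : ∀ x y, G.Adj x y → s(x, y) ≠ s(u, v) → x = u ∨ x = v → c ∈ s(x, y) := by
    rintro x y hxy hne (rfl | rfl)
    · obtain rfl | rfl := hu y hxy <;> simp_all
    · obtain rfl | h := hv
      · simp
      obtain rfl | rfl := h y hxy
      · exact absurd Sym2.eq_swap hne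
      · simp
  refine ⟨s(u, v), huv, c, ?_⟩
  rintro f hf hne ⟨x, hx, hxf⟩
  obtain ⟨y, rfl⟩ := Sym2.mem_iff_exists.1 hxf
  exact key x y hf hne (Sym2.mem_iff.1 hx)

theorem isCycle_length_lt_of_le {H : SimpleGraph V} {n : ℕ} (hHG : H ≤ G)
    (hG : ∀ (v : V) (p : G.Walk v v), p.IsCycle → p.length < n) :
    ∀ (v : V) (p : H.Walk v v), p.IsCycle → p.length < n := fun v p hp ↦ by
  simpa using hG v (p.mapLe hHG) (hp.mapLe hHG)

theorem lineGraph_exists_isClique_neighborSet [Finite V]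
    (hG : ∀ (v : V) (p : G.Walk v v), p.IsCycle → p.length < 4)
    (A : Finset G.edgeSet) (hA : A.Nonempty) :
    ∃ e ∈ A, G.lineGraph.IsClique (↑A ∩ G.lineGraph.neighborSet e) := by
  set G' := fromEdgeSet (Subtype.val '' (A : Set G.edgeSet))
  have hG'G : G' ≤ G := (fromEdgeSet_le G).2 fun _ ⟨⟨f, _, hf⟩, _⟩ ↦ hf ▸ f.2
  have hG' : G'.edgeSet = Subtype.val '' (A : Set G.edgeSet) := (edgeSet_eq_iff _ _).2
    ⟨rfl, Set.disjoint_left.2 fun _ ⟨f, _, hf⟩ ↦ hf ▸ edgeSet_subset_compl_diagSet G f.2⟩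
  obtain ⟨e', he', c, hc⟩ := exists_mem_edgeSet_forall_meeting_mem (isCycle_length_lt_of_le hG'G hG)
    (hG' ▸ (Finset.coe_nonempty.2 hA).image _)
  obtain ⟨e, heA, rfl⟩ := hG' ▸ he'
  have hcA : ∀ f ∈ A, G.lineGraph.Adj e f → c ∈ (f : Sym2 V) := fun f hfA hef ↦ by
    obtain ⟨hne, x, hxe, hxf⟩ := lineGraph_adj_iff_exists.1 hef
    exact hc f (hG' ▸ ⟨f, hfA, rfl⟩) (fun h ↦ hne (Subtype.ext h).symm) ⟨x, hxe, hxf⟩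
  refine ⟨e, heA, fun f ⟨hfA, hef⟩ g ⟨hgA, heg⟩ hfg ↦ ?_⟩
  exact lineGraph_adj_iff_exists.2 ⟨hfg, c, hcA f hfA hef, hcA g hgA heg⟩

end NoLongCycles

end SimpleGraph

theorem lineGraph_choice_number_eq_chromaticNumber {V : Type*} [Fintype V]
    (G : SimpleGraph V)
    (hnocycle : ∀ (v : V) (p : G.Walk v v), p.IsCycle → p.length < 4) :
    (G.lineGraph.chooseNum 1 : ℕ∞) = G.lineGraph.chromaticNumber :=
  G.lineGraph.chooseNum_one_eq_chromaticNumber_of_forall_exists_isClique_neighborSet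
    (G.lineGraph_exists_isClique_neighborSet hnocycle)
end

section
/- Suppose k and m are positive integers and k is odd. If a finite simple graph G is (2mk:mk)-choosable, then G is also 2m-choosable. -/
/-!
Replace each color `c` by a block of `k` fresh colors and apply `(a k : b)`-choosability to the
blown-up lists. If `a * ⌊k/2⌋ < b`, then by pigeonhole every vertex `v` receives more than half of
some block `c v` with `c v ∈ S v`. Adjacent vertices receive disjoint sets of colors, so they
cannot both own more than half of the same block: `v ↦ c v` is a proper coloring from the lists.
For `a = 2m`, `b = mk` with `k` odd, `2m ⌊k/2⌋ = m(k-1) < mk`.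
-/

open Finset

def blowUp (k : ℕ) (s : Finset ℕ) : Finset ℕ :=
  (s ×ˢ range k).map Nat.pairEquiv.toEmbedding

theorem mem_blowUp {k : ℕ} {s : Finset ℕ} {x : ℕ} :
    x ∈ blowUp k s ↔ x.unpair.1 ∈ s ∧ x.unpair.2 < k := by
  simp [blowUp, mem_map_equiv]

theorem card_blowUp (k : ℕ) (s : Finset ℕ) : #(blowUp k s) = #s * k := by
  simp [blowUp]

theorem filter_unpair_fst_subset_blowUp {k : ℕ} {s C : Finset ℕ} (hC : C ⊆ blowUp k s) (c : ℕ) :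
    {x ∈ C | x.unpair.1 = c} ⊆ blowUp k {c} := by
  intro x hx
  rw [mem_filter] at hx
  simpa [mem_blowUp, hx.2] using (mem_blowUp.1 (hC hx.1)).2

theorem exists_mem_lt_card_filter_unpair_fst {k : ℕ} {s C : Finset ℕ} (hC : C ⊆ blowUp k s)
    (hs : #s * (k / 2) < #C) : ∃ c ∈ s, k < 2 * #{x ∈ C | x.unpair.1 = c} := by
  obtain ⟨c, hcs, hc⟩ := exists_lt_card_fiber_of_mul_lt_card_of_maps_to
    (fun x hx => (mem_blowUp.1 (hC hx)).1) hs
  exact ⟨c, hcs, by omega⟩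

theorem card_filter_unpair_fst_add_le {k : ℕ} {s t C D : Finset ℕ} (hCD : Disjoint C D)
    (hC : C ⊆ blowUp k s) (hD : D ⊆ blowUp k t) (c : ℕ) :
    #{x ∈ C | x.unpair.1 = c} + #{x ∈ D | x.unpair.1 = c} ≤ k := by
  rw [← card_union_of_disjoint (disjoint_filter_filter hCD)]
  calc #({x ∈ C | x.unpair.1 = c} ∪ {x ∈ D | x.unpair.1 = c})
      ≤ #(blowUp k {c}) := card_le_card <| union_subset
          (filter_unpair_fst_subset_blowUp hC c) (filter_unpair_fst_subset_blowUp hD c)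
    _ = k := by rw [card_blowUp, card_singleton, one_mul]

theorem SimpleGraph.Choosable.choosable_of_mul_half_lt {V : Type*} {G : SimpleGraph V}
    {a b k : ℕ} (h : G.Choosable (a * k) b) (hab : a * (k / 2) < b) : G.Choosable a 1 := by
  intro S hS
  obtain ⟨C, hCS, hCcard, hCadj⟩ :=
    h (fun v => blowUp k (S v)) (fun v => by rw [card_blowUp, hS])
  have hmajority : ∀ v, ∃ c ∈ S v, k < 2 * #{x ∈ C v | x.unpair.1 = c} := fun v =>
    exists_mem_lt_card_filter_unpair_fst (hCS v) (by rwa [hS, hCcard])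
  choose c hcS hc using hmajority
  refine ⟨fun v => {c v}, fun v => singleton_subset_iff.2 (hcS v), fun _ => card_singleton _,
    fun u v huv => disjoint_singleton.2 fun hcuv => ?_⟩
  have hsum := card_filter_unpair_fst_add_le (hCadj u v huv) (hCS u) (hCS v) (c v)
  have hu := hc u
  rw [hcuv] at hu
  have hv := hc v
  omega

theorem two_mk_choosable_implies_two_m_choosable_general {V : Type*}
    (G : SimpleGraph V) (k m : ℕ) (hm : 0 < m) (hodd : Odd k)
    (h : G.Choosable (2 * m * k) (m * k)) :
    G.Choosable (2 * m) 1 := by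
  obtain ⟨j, rfl⟩ := hodd
  refine h.choosable_of_mul_half_lt ?_
  rw [show (2 * j + 1) / 2 = j by omega]
  nlinarith

theorem two_mk_choosable_implies_two_m_choosable {V : Type*} [Fintype V]
    (G : SimpleGraph V) (k m : ℕ) (hk : 0 < k) (hm : 0 < m) (hodd : Odd k)
    (h : G.Choosable (2 * m * k) (m * k)) :
    G.Choosable (2 * m) 1 :=
  two_mk_choosable_implies_two_m_choosable_general G k m hm hodd h
end

section
/- If a finite simple graph G is strongly k-colorable, then G is strongly (k+1)-colorable as well. -/
/-- The graph obtained from `G` by adding all edges inside each member of a family `P`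
of subsets of the vertices. -/
def SimpleGraph.addCliques {V : Type*} (G : SimpleGraph V) (P : Set (Set V)) :
    SimpleGraph V :=
  G ⊔ SimpleGraph.fromRel (fun u v => ∃ A ∈ P, u ∈ A ∧ v ∈ A)

/-- `G` is strongly `k`-colorable if every graph obtained from `G` by adding a union of
vertex-disjoint cliques of size at most `k` is `k`-colorable. -/
def SimpleGraph.StronglyColorable {V : Type*} (G : SimpleGraph V) (k : ℕ) : Prop :=
  ∀ P : Set (Set V), P.PairwiseDisjoint id → (∀ A ∈ P, A.ncard ≤ k) →
    (G.addCliques P).Colorable k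

/-!
Given parts of size at most `k + 1`, shrink every part to at most `k` vertices and `k`-color
the resulting graph. In each shrunk part of size exactly `k` every color occurs, so the vertices
of color `0` lying in shrunk parts form a set `T` that is independent in `G`, has at most one
vertex in each part and meets every part of size `k + 1`. Removing `T` from all parts leaves
parts of size at most `k`; a `k`-coloring of that graph, with `T` as an extra color class, is a
`(k + 1)`-coloring.
-/

namespace SimpleGraph

variable {V : Type*} {G H H' : SimpleGraph V} {P : Set (Set V)} {T : Set V} {k : ℕ}

@[simp]
lemma addCliques_adj {u v : V} :
    (G.addCliques P).Adj u v ↔ G.Adj u v ∨ u ≠ v ∧ ∃ A ∈ P, u ∈ A ∧ v ∈ A := by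
  simp only [addCliques, sup_adj, fromRel_adj]
  constructor
  · rintro (huv | ⟨hne, ⟨A, hA, hu, hv⟩ | ⟨A, hA, hv, hu⟩⟩)
    exacts [.inl huv, .inr ⟨hne, A, hA, hu, hv⟩, .inr ⟨hne, A, hA, hu, hv⟩]
  · rintro (huv | ⟨hne, hA⟩)
    exacts [.inl huv, .inr ⟨hne, .inl hA⟩]

lemma le_addCliques : G ≤ G.addCliques P := le_sup_left

lemma isClique_addCliques {A : Set V} (hA : A ∈ P) : (G.addCliques P).IsClique A :=
  fun _ hu _ hv huv => addCliques_adj.2 (.inr ⟨huv, A, hA, hu, hv⟩)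

lemma isIndepSet_addCliques (hT : G.IsIndepSet T) (hPT : ∀ A ∈ P, (A ∩ T).Subsingleton) :
    (G.addCliques P).IsIndepSet T := by
  intro u hu v hv huv hadj
  rcases addCliques_adj.1 hadj with hadj | ⟨-, A, hA, huA, hvA⟩
  · exact hT hu hv huv hadj
  · exact huv (hPT A hA ⟨huA, hu⟩ ⟨hvA, hv⟩)

lemma addCliques_adj_image_diff {u v : V} (huv : (G.addCliques P).Adj u v) (hu : u ∉ T)
    (hv : v ∉ T) : (G.addCliques ((· \ T) '' P)).Adj u v := by
  rcases addCliques_adj.1 huv with hadj | ⟨hne, A, hA, huA, hvA⟩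
  · exact le_addCliques hadj
  · exact addCliques_adj.2 (.inr ⟨hne, A \ T, ⟨A, hA, rfl⟩, ⟨huA, hu⟩, ⟨hvA, hv⟩⟩)

lemma Coloring.injOn_of_isClique {α : Type*} (C : G.Coloring α) {s : Set V}
    (hs : G.IsClique s) : Set.InjOn C s := by
  intro x hx y hy hxy
  by_contra hne
  exact C.valid (hs hx hy hne) hxy

lemma Coloring.exists_mem_of_isClique_ncard {s : Set V} (C : G.Coloring (Fin k))
    (hs : G.IsClique s) (hsk : s.ncard = k) (c : Fin k) : ∃ x ∈ s, C x = c := by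
  have hfin : s.Finite := Set.finite_of_ncard_pos (hsk ▸ c.pos)
  obtain ⟨x, hx, hxc⟩ := C.surjOn_of_card_le_isClique (s := hfin.toFinset) (by simpa using hs)
    (by rw [Fintype.card_fin, ← hsk, Set.ncard_eq_toFinset_card s hfin]) (Set.mem_univ c)
  exact ⟨x, by simpa using hx, hxc⟩

lemma Colorable.succ_of_isIndepSet (hT : H.IsIndepSet T)
    (hH' : ∀ ⦃u v⦄, H.Adj u v → u ∉ T → v ∉ T → H'.Adj u v) (h : H'.Colorable k) :
    H.Colorable (k + 1) := by
  classical
  obtain ⟨C⟩ := h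
  refine ⟨Coloring.mk (fun x => if x ∈ T then Fin.last k else (C x).castSucc) ?_⟩
  intro u v huv
  by_cases hu : u ∈ T <;> by_cases hv : v ∈ T <;> simp only [hu, hv, if_true, if_false]
  · exact absurd huv (hT hu hv huv.ne)
  · exact (Fin.castSucc_lt_last (C v)).ne'
  · exact (Fin.castSucc_lt_last (C u)).ne
  · exact Fin.castSucc_injective k |>.ne (C.valid (hH' huv hu hv))

namespace StronglyColorable

lemma colorable_addCliques_image (h : G.StronglyColorable k) (hP : P.PairwiseDisjoint id)
    (g : Set V → Set V) (hg : ∀ A, g A ⊆ A) (hgk : ∀ A ∈ P, (g A).ncard ≤ k) :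
    (G.addCliques (g '' P)).Colorable k :=
  h _ (hP.image_of_le hg) (by rintro _ ⟨A, hA, rfl⟩; exact hgk A hA)

lemma exists_transversal [Finite V] (h : G.StronglyColorable k) (hk : 0 < k)
    (hP : P.PairwiseDisjoint id) :
    ∃ T : Set V, G.IsIndepSet T ∧ (∀ A ∈ P, (A ∩ T).Subsingleton) ∧
      ∀ A ∈ P, k ≤ A.ncard → (A ∩ T).Nonempty := by
  choose g hgA hgcard using fun A : Set V => A.exists_subset_card_eq (min_le_left A.ncard k)
  obtain ⟨C⟩ := h.colorable_addCliques_image hP g hgA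
    fun A _ => (hgcard A).trans_le (min_le_right _ _)
  have hclique : ∀ A ∈ P, (G.addCliques (g '' P)).IsClique (g A) :=
    fun A hA => isClique_addCliques ⟨A, hA, rfl⟩
  refine ⟨{x | C x = ⟨0, hk⟩ ∧ ∃ A ∈ P, x ∈ g A}, ?_, ?_, ?_⟩
  · intro x hx y hy _ hxy
    exact C.valid (le_addCliques hxy) (hx.1.trans hy.1.symm)
  · have hpart : ∀ A ∈ P, ∀ B ∈ P, ∀ x ∈ A, x ∈ g B → x ∈ g A := fun A hA B hB x hxA hxB =>
      hP.elim hB hA (Set.not_disjoint_iff.2 ⟨x, hgA B hxB, hxA⟩) ▸ hxB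
    rintro A hA x ⟨hxA, hx0, B, hB, hxB⟩ y ⟨hyA, hy0, B', hB', hyB'⟩
    exact C.injOn_of_isClique (hclique A hA) (hpart A hA B hB x hxA hxB)
      (hpart A hA B' hB' y hyA hyB') (hx0.trans hy0.symm)
  · intro A hA hkA
    obtain ⟨x, hx, hx0⟩ := C.exists_mem_of_isClique_ncard (hclique A hA)
      ((hgcard A).trans (min_eq_right hkA)) ⟨0, hk⟩
    exact ⟨x, hgA A hx, hx0, A, hA, hx⟩

end StronglyColorable

end SimpleGraph

open SimpleGraph in
theorem stronglyColorable_succ {V : Type*} [Fintype V] (G : SimpleGraph V) (k : ℕ)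
    (h : G.StronglyColorable k) :
    G.StronglyColorable (k + 1) := by
  rcases k.eq_zero_or_pos with rfl | hk
  · have : IsEmpty V := (h ∅ (by simp) (by simp)).isEmpty
    exact fun _ _ _ => .of_isEmpty 1
  intro P hP hcard
  obtain ⟨T, hTG, hTsub, hTne⟩ := h.exists_transversal hk hP
  have hcard_diff : ∀ A ∈ P, (A \ T).ncard ≤ k := by
    intro A hA
    rcases (hcard A hA).lt_or_eq with hlt | heq
    · exact (Set.ncard_le_ncard Set.sdiff_subset).trans (Nat.lt_succ_iff.1 hlt)
    · obtain ⟨t, htA, htT⟩ := hTne A hA (heq ▸ k.le_succ)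
      have := Set.ncard_lt_ncard (Set.sdiff_ssubset_left_iff.2 ⟨t, htA, htT⟩) A.toFinite
      omega
  exact Colorable.succ_of_isIndepSet (isIndepSet_addCliques hTG hTsub)
    (fun _ _ => addCliques_adj_image_diff)
    (h.colorable_addCliques_image hP (· \ T) (fun _ => Set.sdiff_subset) hcard_diff)
end

section
/- For every d ≥ 1 the strong chromatic number satisfies sχ(d) ≥ 2d; that is, there exists a finite simple graph G with maximum degree at most d that is not strongly (2d−1)-colorable. -/
namespace SimpleGraph

variable {V W : Type*}

lemma completeBipartiteGraph_neighborSet_inl (v : V) :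
    (completeBipartiteGraph V W).neighborSet (.inl v) = Set.range Sum.inr := by
  ext (w | w) <;> simp

lemma completeBipartiteGraph_neighborSet_inr (w : W) :
    (completeBipartiteGraph V W).neighborSet (.inr w) = Set.range Sum.inl := by
  ext (v | v) <;> simp

lemma ncard_neighborSet_completeBipartiteGraph_self (v : V ⊕ V) :
    ((completeBipartiteGraph V V).neighborSet v).ncard = Nat.card V := by
  rcases v with v | v
  · rw [completeBipartiteGraph_neighborSet_inl, Set.ncard_range_of_injective Sum.inr_injective]
  · rw [completeBipartiteGraph_neighborSet_inr, Set.ncard_range_of_injective Sum.inl_injective]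

lemma pairwiseDisjoint_range_inl_range_inr :
    ({Set.range Sum.inl, Set.range Sum.inr} : Set (Set (V ⊕ W))).PairwiseDisjoint id :=
  Set.pairwise_pair_of_symm.2 fun _ => Set.isCompl_range_inl_range_inr.disjoint

lemma addCliques_completeBipartiteGraph_sides :
    (completeBipartiteGraph V W).addCliques {Set.range Sum.inl, Set.range Sum.inr} = ⊤ := by
  ext (u | u) (v | v) <;> simp [addCliques, eq_comm]

theorem not_stronglyColorable_completeBipartiteGraph [Finite V] [Finite W] {k : ℕ}
    (hV : Nat.card V ≤ k) (hW : Nat.card W ≤ k) (hk : k < Nat.card V + Nat.card W) :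
    ¬ (completeBipartiteGraph V W).StronglyColorable k := by
  intro h
  have hcol := h _ pairwiseDisjoint_range_inl_range_inr <| by
    rintro A (rfl | rfl)
    · rwa [Set.ncard_range_of_injective Sum.inl_injective]
    · rwa [Set.ncard_range_of_injective Sum.inr_injective]
  rw [addCliques_completeBipartiteGraph_sides] at hcol
  have := hcol.card_le_of_pairwise_adj id fun _ _ huv => huv
  rw [Nat.card_sum] at this
  omega

end SimpleGraph

theorem strong_chromatic_number_lower_bound (d : ℕ) (hd : 1 ≤ d) :
    ∃ (V : Type) (_ : Fintype V) (G : SimpleGraph V),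
      (∀ v : V, (G.neighborSet v).ncard ≤ d) ∧
      ¬ G.StronglyColorable (2 * d - 1) := by
  refine ⟨Fin d ⊕ Fin d, inferInstance, completeBipartiteGraph (Fin d) (Fin d),
    fun v => ?_, ?_⟩
  · rw [SimpleGraph.ncard_neighborSet_completeBipartiteGraph_self, Nat.card_fin]
  · apply SimpleGraph.not_stronglyColorable_completeBipartiteGraph <;>
      simp only [Nat.card_fin] <;> omega
end
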